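/- arXiv:2603.15963 — 9 statements merged into one kernel-verified Lean document; each statement's English description precedes it below -/
import Mathlib

section
/- The function G satisfies: (i) G is continuous and nonincreasing on [0, ∞); (ii) G(0) = ∑_{i=1}^n q_i and G(t) = 0 for all t ≥ max_{1 ≤ i ≤ n} ℓ_i(0), where ℓ_i(0) := p_τ q_i / E_i; (iii) G is strictly decreasing on [0, max_i ℓ_i(0)]; (iv) there exists a unique t★ ∈ (0, max_i ℓ_i(0)) such that G(t★) = Q. -/
/-- properties of the aggregate deleveraging demand
`G(t) = ∑_i max(q_i − (E_i/p_τ) t, 0)`: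
(i) continuity and monotonicity on `[0, ∞)`; (ii) boundary values; (iii) strict decrease
on `[0, max_i ℓ_i(0)]`; (iv) existence and uniqueness of `t★ ∈ (0, max_i ℓ_i(0))` with
`G(t★) = Q`. -/
theorem G_properties {n : ℕ} [NeZero n]
    (q pe m : Fin n → ℝ) (pτ Q : ℝ)
    (hq : ∀ i, 0 < q i) (hm : ∀ i, 0 ≤ m i) (hpτ : 0 < pτ)
    (hQ0 : 0 < Q) (hQtop : Q < ∑ i, q i)
    (E : Fin n → ℝ) (hE : ∀ i, E i = q i * (pe i - pτ) + m i) (hEpos : ∀ i, 0 < E i)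
    (G : ℝ → ℝ) (hG : ∀ t, G t = ∑ i, max (q i - E i / pτ * t) 0) :
    ContinuousOn G (Set.Ici 0)
    ∧ AntitoneOn G (Set.Ici 0)
    ∧ G 0 = ∑ i, q i
    ∧ (∀ t, (Finset.univ.sup' Finset.univ_nonempty fun i => pτ * q i / E i) ≤ t → G t = 0)
    ∧ StrictAntiOn G
        (Set.Icc 0 (Finset.univ.sup' Finset.univ_nonempty fun i => pτ * q i / E i))
    ∧ (∃! t : ℝ,
        t ∈ Set.Ioo 0 (Finset.univ.sup' Finset.univ_nonempty fun i => pτ * q i / E i)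
        ∧ G t = Q) := by
  set T := Finset.univ.sup' Finset.univ_nonempty fun i => pτ * q i / E i with hTdef
  have hc : ∀ i, 0 < E i / pτ := fun i => div_pos (hEpos i) hpτ
  have hTpos : 0 < T :=
    lt_of_lt_of_le (div_pos (mul_pos hpτ (hq 0)) (hEpos 0))
      (Finset.le_sup' (fun i => pτ * q i / E i) (Finset.mem_univ (0 : Fin n)))
  have hGcont : Continuous G := by
    have hfun : G = fun t => ∑ i, max (q i - E i / pτ * t) 0 := funext hG
    rw [hfun]
    exact continuous_finset_sum _ fun i _ =>
      ((continuous_const.sub (continuous_const.mul continuous_id)).max continuous_const)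
  have hGanti : Antitone G := by
    intro s t hst
    rw [hG, hG]
    refine Finset.sum_le_sum fun i _ => max_le_max ?_ le_rfl
    exact sub_le_sub_left (mul_le_mul_of_nonneg_left hst (hc i).le) _
  have hG0 : G 0 = ∑ i, q i := by
    rw [hG]
    simp only [mul_zero, sub_zero]
    exact Finset.sum_congr rfl fun i _ => max_eq_left (hq i).le
  have hGzero : ∀ t, T ≤ t → G t = 0 := by
    intro t ht
    rw [hG]
    refine Finset.sum_eq_zero fun i _ => max_eq_right ?_
    have h1 : pτ * q i / E i ≤ t := le_trans (Finset.le_sup' (fun i => pτ * q i / E i) (Finset.mem_univ i)) ht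
    rw [div_le_iff₀ (hEpos i)] at h1
    rw [sub_nonpos, div_mul_eq_mul_div, le_div_iff₀ hpτ]
    nlinarith
  have hstrict : StrictAntiOn G (Set.Icc 0 T) := by
    intro s hs t ht hst
    rw [hG, hG]
    obtain ⟨i, -, hi⟩ := Finset.exists_mem_eq_sup' (Finset.univ_nonempty (α := Fin n))
      (fun i => pτ * q i / E i)
    refine Finset.sum_lt_sum (fun j _ => max_le_max
      (sub_le_sub_left (mul_le_mul_of_nonneg_left hst.le (hc j).le) _) le_rfl)
      ⟨i, Finset.mem_univ i, ?_⟩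
    have hsT : s < pτ * q i / E i := lt_of_lt_of_le hst (ht.2.trans_eq hi)
    rw [lt_div_iff₀ (hEpos i)] at hsT
    have hpos : 0 < q i - E i / pτ * s := by
      rw [sub_pos, div_mul_eq_mul_div, div_lt_iff₀ hpτ]
      nlinarith
    have hlt : q i - E i / pτ * t < q i - E i / pτ * s :=
      sub_lt_sub_left (mul_lt_mul_of_pos_left hst (hc i)) _
    rw [max_eq_left hpos.le]
    exact max_lt hlt hpos
  have hGT : G T = 0 := hGzero T le_rfl
  have hQmem : Q ∈ Set.Icc (G T) (G 0) := ⟨hGT ▸ hQ0.le, hG0 ▸ hQtop.le⟩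
  obtain ⟨t, htmem, htQ⟩ := intermediate_value_Icc' hTpos.le hGcont.continuousOn hQmem
  refine ⟨hGcont.continuousOn, hGanti.antitoneOn _, hG0, hGzero, hstrict, ?_⟩
  have ht0' : 0 < t := by
    rcases eq_or_lt_of_le htmem.1 with h | h
    · exfalso; rw [← h, hG0] at htQ; exact absurd htQ (ne_of_gt hQtop)
    · exact h
  have htT : t < T := by
    rcases eq_or_lt_of_le htmem.2 with h | h
    · exfalso; rw [h, hGT] at htQ; exact absurd htQ (ne_of_lt hQ0)
    · exact h
  refine ⟨t, ⟨⟨ht0', htT⟩, htQ⟩, fun y hy =>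
    hstrict.injOn (Set.Ioo_subset_Icc_self hy.1) ⟨htmem.1, htmem.2⟩ (hy.2.trans htQ.symm)⟩
end

section
/- Let t★ be the unique t ∈ (0, max_i ℓ_i(0)) with G(t★) = Q, and set x★ := (y_1(t★), …, y_n(t★)). Then x★ ∈ X, x★ is the unique minimizer over X of the map x ↦ max_{1 ≤ i ≤ n} ℓ_i(x_i), and max_{1 ≤ i ≤ n} ℓ_i(x★_i) = t★. -/
/-- The feasible set of ADL allocations. -/
def feas {n : ℕ} (q : Fin n → ℝ) (Q : ℝ) : Set (Fin n → ℝ) :=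
  {x | (∑ i, x i) = Q ∧ ∀ i, 0 ≤ x i ∧ x i ≤ q i}

/-- Maximal post-ADL leverage of an allocation. -/
noncomputable def maxLev {n : ℕ} [NeZero n] (q E : Fin n → ℝ) (pτ : ℝ)
    (x : Fin n → ℝ) : ℝ :=
  Finset.univ.sup' Finset.univ_nonempty fun i => pτ * (q i - x i) / E i

/-- with `tstar` the unique root of `G(t) = Q` in `(0, max_i ℓ_i(0))`, the
water-filling allocation `xstar = y(tstar)` is feasible, it is the unique minimizer of the
maximal post-ADL leverage over the feasible set, and its maximal leverage equals `tstar`. -/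
theorem minimax_solution {n : ℕ} [NeZero n]
    (q pe m : Fin n → ℝ) (pτ Q : ℝ)
    (hq : ∀ i, 0 < q i) (hm : ∀ i, 0 ≤ m i) (hpτ : 0 < pτ)
    (hQ0 : 0 < Q) (hQtop : Q < ∑ i, q i)
    (E : Fin n → ℝ) (hE : ∀ i, E i = q i * (pe i - pτ) + m i) (hEpos : ∀ i, 0 < E i)
    (tstar : ℝ)
    (htstarmem : tstar ∈ Set.Ioo 0 (Finset.univ.sup' Finset.univ_nonempty fun i => pτ * q i / E i))
    (htstar : (∑ i, max (q i - E i / pτ * tstar) 0) = Q)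
    (xstar : Fin n → ℝ) (hxstar : ∀ i, xstar i = max (q i - E i / pτ * tstar) 0) :
    xstar ∈ feas q Q
    ∧ (∀ x ∈ feas q Q, maxLev q E pτ xstar ≤ maxLev q E pτ x)
    ∧ (∀ x ∈ feas q Q, (∀ x' ∈ feas q Q, maxLev q E pτ x ≤ maxLev q E pτ x') → x = xstar)
    ∧ maxLev q E pτ xstar = tstar := by
  have hpτ' : pτ ≠ 0 := ne_of_gt hpτ
  obtain ⟨ht0, httop⟩ := htstarmem
  -- basic bound translations
  have key : ∀ i (x : ℝ), pτ * (q i - x) / E i ≤ tstar ↔ q i - E i / pτ * tstar ≤ x := by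
    intro i x
    have hc : E i / pτ * pτ = E i := div_mul_cancel₀ _ hpτ'
    rw [div_le_iff₀ (hEpos i)]
    constructor <;> intro h <;> nlinarith [hpτ, hEpos i]
  have keylt : ∀ i (x : ℝ), pτ * (q i - x) / E i < tstar ↔ q i - E i / pτ * tstar < x := by
    intro i x
    have hc : E i / pτ * pτ = E i := div_mul_cancel₀ _ hpτ'
    rw [div_lt_iff₀ (hEpos i)]
    constructor <;> intro h <;> nlinarith [hpτ, hEpos i]
  have hxnn : ∀ i, 0 ≤ xstar i := fun i => (hxstar i) ▸ le_max_right _ _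
  have hxmem : xstar ∈ feas q Q := by
    refine ⟨by simp only [hxstar]; exact htstar, fun i => ⟨hxnn i, ?_⟩⟩
    rw [hxstar i]
    have h0 : 0 ≤ E i / pτ * tstar := mul_nonneg (div_nonneg (hEpos i).le hpτ.le) ht0.le
    exact max_le (by linarith) (le_of_lt (hq i))
  have hsum : ∑ i, xstar i = Q := hxmem.1
  -- each term of maxLev xstar is ≤ tstar
  have hterm_le : ∀ i, pτ * (q i - xstar i) / E i ≤ tstar := by
    intro i
    rw [key]
    rw [hxstar i]; exact le_max_left _ _
  -- maxLev xstar = tstar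
  have hmaxeq : maxLev q E pτ xstar = tstar := by
    apply le_antisymm
    · exact Finset.sup'_le _ _ fun i _ => hterm_le i
    · obtain ⟨j, -, hj⟩ := (Finset.lt_sup'_iff Finset.univ_nonempty).mp httop
      have hjpos : 0 < q j - E j / pτ * tstar := by
        have hc : E j / pτ * pτ = E j := div_mul_cancel₀ _ hpτ'
        rw [lt_div_iff₀ (hEpos j)] at hj
        nlinarith [hpτ, hEpos j]
      have hxj : xstar j = q j - E j / pτ * tstar := by
        rw [hxstar j]; exact max_eq_left hjpos.le
      have heq : pτ * (q j - xstar j) / E j = tstar := by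
        rw [hxj]
        field_simp
        rw [sub_sub_cancel]; exact mul_div_cancel_left₀ tstar (ne_of_gt (hEpos j))
      unfold maxLev
      rw [← heq]
      exact Finset.le_sup' (fun i => pτ * (q i - xstar i) / E i) (Finset.mem_univ j)
  -- minimality
  have hmin : ∀ x ∈ feas q Q, tstar ≤ maxLev q E pτ x := by
    intro x hx
    by_contra hcon
    push_neg at hcon
    unfold maxLev at hcon
    have hlt : ∀ i, q i - E i / pτ * tstar < x i := by
      intro i
      rw [← keylt]
      exact lt_of_le_of_lt (Finset.le_sup' (fun i => pτ * (q i - x i) / E i) (Finset.mem_univ i)) hcon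
    have hle : ∀ i, xstar i ≤ x i := by
      intro i
      rw [hxstar i]
      exact max_le (hlt i).le (hx.2 i).1
    -- some xstar j > 0
    have : (∑ _i : Fin n, (0 : ℝ)) < ∑ i, xstar i := by
      simp [hsum]; exact hQ0
    obtain ⟨j, -, hjpos⟩ := Finset.exists_lt_of_sum_lt this
    have hxj : xstar j = q j - E j / pτ * tstar := by
      rw [hxstar j]
      rw [hxstar j] at hjpos
      rcases le_or_gt (q j - E j / pτ * tstar) 0 with h | h
      · simp [max_eq_right h] at hjpos
      · exact max_eq_left h.le
    have hstrict : ∑ i, xstar i < ∑ i, x i :=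
      Finset.sum_lt_sum (fun i _ => hle i) ⟨j, Finset.mem_univ j, by rw [hxj]; exact hlt j⟩
    rw [hsum, hx.1] at hstrict
    exact lt_irrefl Q hstrict
  refine ⟨hxmem, ?_, ?_, hmaxeq⟩
  · intro x hx
    rw [hmaxeq]; exact hmin x hx
  · intro x hx hopt
    have h1 : maxLev q E pτ x ≤ tstar := hmaxeq ▸ hopt xstar hxmem
    unfold maxLev at h1
    have hle : ∀ i, xstar i ≤ x i := by
      intro i
      rw [hxstar i]
      refine max_le ?_ (hx.2 i).1
      rw [← key]
      exact le_trans (Finset.le_sup' (fun i => pτ * (q i - x i) / E i) (Finset.mem_univ i)) h1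
    have hsum' : ∑ i, xstar i = ∑ i, x i := by rw [hsum, hx.1]
    have := (Finset.sum_eq_sum_iff_of_le (fun i _ => hle i)).mp hsum'
    funext i
    exact (this i (Finset.mem_univ i)).symm
end

section
/- The minimax leverage (water-filling) policy is Sybil resistant: with t_1★ the unique root of ∑_{j∈N} y_{q_j,E_j}(t) + y_{q^A,E^A}(t) = Q and t_K★ the unique root of ∑_{j∈N} y_{q_j,E_j}(t) + ∑_{k=1}^K y_{q_k,E_k}(t) = Q, the attacker's total buyback under the split is at least the buyback when unsplit: ∑_{k=1}^K y_{q_k,E_k}(t_K★) ≥ y_{q^A,E^A}(t_1★). -/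
/-- The per-account water-filling demand `y_{a,b}(t) = max(a − (b/p_τ) t, 0)`. -/
noncomputable def yDemand (pτ a b t : ℝ) : ℝ :=
  max (a - b / pτ * t) 0

lemma yDemand_mono {pτ b : ℝ} (hpτ : 0 < pτ) (hb : 0 ≤ b) {a s t : ℝ}
    (hst : s ≤ t) : yDemand pτ a b t ≤ yDemand pτ a b s := by
  unfold yDemand
  have : b / pτ * s ≤ b / pτ * t :=
    mul_le_mul_of_nonneg_left hst (div_nonneg hb hpτ.le)
  exact max_le_max (by linarith) le_rfl

/-- Sybil resistance of the water-filling policy: with `t1` the unique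
root of the unsplit market-clearing equation and `tK` the unique root of the clearing
equation under a Sybil split of the attacker's aggregate `(qA, EA)`, the attacker's
total buyback under the split is at least the buyback when unsplit. -/
theorem waterfilling_sybil_resistant
    {N : Type*} [Fintype N] (pτ : ℝ) (hpτ : 0 < pτ)
    (qN EN : N → ℝ) (hqN : ∀ j, 0 ≤ qN j) (hEN : ∀ j, 0 < EN j)
    (qA EA : ℝ) (hqA : 0 ≤ qA) (hEA : 0 < EA)
    (K : ℕ) (qs Es : Fin K → ℝ)
    (hqs : ∀ k, 0 ≤ qs k) (hEs : ∀ k, 0 < Es k)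
    (hsplitq : ∑ k, qs k = qA) (hsplitE : ∑ k, Es k = EA)
    (Q : ℝ) (hQ0 : 0 < Q) (hQtop : Q < (∑ j, qN j) + qA)
    (t1 : ℝ) (ht1 : (∑ j, yDemand pτ (qN j) (EN j) t1) + yDemand pτ qA EA t1 = Q)
    (tK : ℝ) (htK : (∑ j, yDemand pτ (qN j) (EN j) tK) + ∑ k, yDemand pτ (qs k) (Es k) tK = Q) :
    yDemand pτ qA EA t1 ≤ ∑ k, yDemand pτ (qs k) (Es k) tK := by
  rcases le_total t1 tK with h | h
  · -- sides of N shrink, so split side grows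
    have hmono : ∀ j, yDemand pτ (qN j) (EN j) tK ≤ yDemand pτ (qN j) (EN j) t1 := by
      intro j
      exact yDemand_mono hpτ (le_of_lt (hEN j)) h
    have hsum : (∑ j, yDemand pτ (qN j) (EN j) tK) ≤ ∑ j, yDemand pτ (qN j) (EN j) t1 :=
      Finset.sum_le_sum fun j _ => hmono j
    linarith
  · -- t1 ≥ tK: use superadditivity at t1 and monotonicity of split demands
    have hsuper : yDemand pτ qA EA t1 ≤ ∑ k, yDemand pτ (qs k) (Es k) t1 := by
      have : qA - EA / pτ * t1 = ∑ k, (qs k - Es k / pτ * t1) := by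
        rw [← hsplitq, ← hsplitE, Finset.sum_sub_distrib, ← Finset.sum_mul,
          ← Finset.sum_div]
      unfold yDemand
      rw [this]
      refine max_le (Finset.sum_le_sum fun k _ => le_max_left _ _) ?_
      exact Finset.sum_nonneg fun k _ => le_max_right _ _
    have hmono : ∀ k, yDemand pτ (qs k) (Es k) t1 ≤ yDemand pτ (qs k) (Es k) tK :=
      fun k => yDemand_mono hpτ (le_of_lt (hEs k)) h
    calc yDemand pτ qA EA t1 ≤ ∑ k, yDemand pτ (qs k) (Es k) t1 := hsuper
      _ ≤ ∑ k, yDemand pτ (qs k) (Es k) tK := Finset.sum_le_sum fun k _ => hmono k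
end

section
/- Let {F_Q} be an ADL mechanism satisfying market clearing and path-independence, and fix a state s ∈ S. Then for each i, the map Q ↦ x_i(s, Q) is nonnegative, nondecreasing, and 1-Lipschitz on [0, ∑_{j=1}^n q_j]. -/
/-- A state `(q, E)` is valid if all positions are nonnegative and all equities positive. -/
def ValidState {n : ℕ} (q E : Fin n → ℝ) : Prop :=
  (∀ i, 0 ≤ q i) ∧ (∀ i, 0 < E i)

/-- Market clearing for an ADL mechanism, described by its allocation map
`A q E Q i` (the buyback assigned to account `i` in state `(q, E)` for total
quantity `Q`); the post-ADL state is `(q_i − A q E Q i, E_i)`. -/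
def MarketClearing {n : ℕ} (A : (Fin n → ℝ) → (Fin n → ℝ) → ℝ → Fin n → ℝ) : Prop :=
  ∀ q E : Fin n → ℝ, ValidState q E →
    ∀ Q : ℝ, 0 ≤ Q → Q ≤ ∑ i, q i →
      (∀ i, A q E Q i ∈ Set.Icc 0 (q i)) ∧ (∑ i, A q E Q i) = Q

/-- Path-independence: `F_{Q₁+Q₂}(s) = F_{Q₂}(F_{Q₁}(s))`, expressed on allocations. -/
def PathIndependent {n : ℕ} (A : (Fin n → ℝ) → (Fin n → ℝ) → ℝ → Fin n → ℝ) : Prop :=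
  ∀ q E : Fin n → ℝ, ValidState q E →
    ∀ Q₁ Q₂ : ℝ, 0 ≤ Q₁ → 0 ≤ Q₂ → Q₁ + Q₂ ≤ ∑ i, q i →
      ∀ i, A q E (Q₁ + Q₂) i = A q E Q₁ i + A (fun j => q j - A q E Q₁ j) E Q₂ i

lemma alloc_diff {n : ℕ}
    (A : (Fin n → ℝ) → (Fin n → ℝ) → ℝ → Fin n → ℝ)
    (hmc : MarketClearing A) (hpi : PathIndependent A)
    (q E : Fin n → ℝ) (hs : ValidState q E)
    (i : Fin n) (Q₁ Q₂ : ℝ) (h1 : Q₁ ∈ Set.Icc (0 : ℝ) (∑ j, q j))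
    (h2 : Q₂ ∈ Set.Icc (0 : ℝ) (∑ j, q j)) (hle : Q₁ ≤ Q₂) :
    0 ≤ A q E Q₂ i - A q E Q₁ i ∧ A q E Q₂ i - A q E Q₁ i ≤ Q₂ - Q₁ := by
  obtain ⟨h10, h1s⟩ := h1
  obtain ⟨h20, h2s⟩ := h2
  set q' : Fin n → ℝ := fun j => q j - A q E Q₁ j with hq'
  have hmc1 := hmc q E hs Q₁ h10 h1s
  have hs' : ValidState q' E := by
    refine ⟨fun j => ?_, hs.2⟩
    have := (hmc1.1 j).2
    simp [hq']; linarith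
  have hsum' : ∑ j, q' j = ∑ j, q j - Q₁ := by
    simp [hq', Finset.sum_sub_distrib, hmc1.2]
  have hd0 : 0 ≤ Q₂ - Q₁ := by linarith
  have hds : Q₂ - Q₁ ≤ ∑ j, q' j := by rw [hsum']; linarith
  have hmc2 := hmc q' E hs' (Q₂ - Q₁) hd0 hds
  have hpi1 := hpi q E hs Q₁ (Q₂ - Q₁) h10 hd0 (by linarith) i
  have key : A q E Q₂ i = A q E Q₁ i + A q' E (Q₂ - Q₁) i := by
    have : Q₁ + (Q₂ - Q₁) = Q₂ := by ring
    rw [this] at hpi1; exact hpi1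
  constructor
  · have := (hmc2.1 i).1
    rw [key]; linarith
  · rw [key]
    have hle' : A q' E (Q₂ - Q₁) i ≤ ∑ j, A q' E (Q₂ - Q₁) j :=
      Finset.single_le_sum (fun j _ => (hmc2.1 j).1) (Finset.mem_univ i)
    rw [hmc2.2] at hle'
    linarith

/-- for a market-clearing, path-independent ADL mechanism and any valid
state, each trajectory `Q ↦ x_i(s, Q)` is nonnegative, nondecreasing and 1-Lipschitz on
`[0, ∑_j q_j]`. -/
theorem alloc_nonneg_monotone_lipschitz {n : ℕ} (pτ : ℝ) (hpτ : 0 < pτ)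
    (A : (Fin n → ℝ) → (Fin n → ℝ) → ℝ → Fin n → ℝ)
    (hmc : MarketClearing A) (hpi : PathIndependent A)
    (q E : Fin n → ℝ) (hs : ValidState q E) :
    ∀ i, ∀ Q₁ ∈ Set.Icc (0 : ℝ) (∑ j, q j), ∀ Q₂ ∈ Set.Icc (0 : ℝ) (∑ j, q j),
      0 ≤ A q E Q₁ i
      ∧ (Q₁ ≤ Q₂ → A q E Q₁ i ≤ A q E Q₂ i)
      ∧ |A q E Q₂ i - A q E Q₁ i| ≤ |Q₂ - Q₁| := by
  intro i Q₁ h1 Q₂ h2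
  refine ⟨(hmc q E hs Q₁ h1.1 h1.2 |>.1 i).1, ?_, ?_⟩
  · intro hle
    have := alloc_diff A hmc hpi q E hs i Q₁ Q₂ h1 h2 hle
    linarith [this.1]
  · rcases le_total Q₁ Q₂ with hle | hle
    · obtain ⟨ha, hb⟩ := alloc_diff A hmc hpi q E hs i Q₁ Q₂ h1 h2 hle
      rw [abs_of_nonneg ha, abs_of_nonneg (by linarith : (0:ℝ) ≤ Q₂ - Q₁)]
      exact hb
    · obtain ⟨ha, hb⟩ := alloc_diff A hmc hpi q E hs i Q₂ Q₁ h2 h1 hle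
      rw [abs_sub_comm, abs_sub_comm Q₂ Q₁,
        abs_of_nonneg ha, abs_of_nonneg (by linarith : (0:ℝ) ≤ Q₁ - Q₂)]
      exact hb
end

section
/- For every confidence level β ∈ (0,1), the water-filling allocation x^WF minimizes the map x ↦ CVaR_β(L(x, p_T)) over the feasible set X. -/
open MeasureTheory

/-- Post-ADL equity. -/
noncomputable def equity (qi pei mi pτ xi p : ℝ) : ℝ :=
  qi * (pei - p) - xi * (pτ - p) + mi

/-- Per-account shortfall. -/
noncomputable def shortfall (qi pei mi pτ xi p : ℝ) : ℝ :=
  max (-(equity qi pei mi pτ xi p)) 0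

/-- Total exchange loss. -/
noncomputable def totalLoss {n : ℕ} (q pe m : Fin n → ℝ) (pτ : ℝ)
    (x : Fin n → ℝ) (p : ℝ) : ℝ :=
  ∑ i, shortfall (q i) (pe i) (m i) pτ (x i) p

/-- Value-at-Risk at level `u`: `VaR_u(Z) = inf{z : P(Z ≤ z) ≥ u}`. -/
noncomputable def VaR {Ω : Type*} [MeasurableSpace Ω] (P : Measure Ω)
    (Z : Ω → ℝ) (u : ℝ) : ℝ :=
  sInf {z : ℝ | u ≤ (P {ω | Z ω ≤ z}).toReal}

/-- Conditional Value-at-Risk at level `β ∈ (0,1)`: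
`CVaR_β(Z) = (1/(1−β)) ∫_β^1 VaR_u(Z) du`. -/
noncomputable def CVaR {Ω : Type*} [MeasurableSpace Ω] (P : Measure Ω)
    (Z : Ω → ℝ) (β : ℝ) : ℝ :=
  (1 - β)⁻¹ * ∫ u in β..1, VaR P Z u

section Aux

open Set

lemma shortfall_rw (qi pei mi pτ xi p : ℝ) :
    shortfall qi pei mi pτ xi p
      = max ((qi - xi) * (p - pτ) - (qi * (pei - pτ) + mi)) 0 := by
  unfold shortfall equity
  congr 1
  ring

lemma waterfill_pointwise {n : ℕ} (q E : Fin n → ℝ) (pτ Q tstar : ℝ)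
    (hEpos : ∀ i, 0 < E i) (hpτ : 0 < pτ) (ht : 0 < tstar)
    (htroot : (∑ i, max (q i - E i / pτ * tstar) 0) = Q)
    (x : Fin n → ℝ) (hxs : (∑ i, x i) = Q) (hxb : ∀ i, 0 ≤ x i ∧ x i ≤ q i)
    (s : ℝ) :
    ∑ i, max ((q i - max (q i - E i / pτ * tstar) 0) * s - E i) 0
      ≤ ∑ i, max ((q i - x i) * s - E i) 0 := by
  have hcnn : ∀ i, 0 ≤ E i / pτ * tstar := fun i =>
    mul_nonneg (div_nonneg (hEpos i).le hpτ.le) ht.le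
  have hw : ∀ i, q i - max (q i - E i / pτ * tstar) 0
      = min (E i / pτ * tstar) (q i) := by
    intro i
    rcases le_total (E i / pτ * tstar) (q i) with h | h
    · rw [min_eq_left h, max_eq_left (by linarith)]; ring
    · rw [min_eq_right h, max_eq_right (by linarith)]; ring
  by_cases hs : s * tstar ≤ pτ
  · -- LHS is zero
    have hL : ∀ i, max ((q i - max (q i - E i / pτ * tstar) 0) * s - E i) 0 = 0 := by
      intro i
      rw [hw i]
      apply max_eq_right
      rcases le_or_gt s 0 with h | h
      · have h1 : 0 ≤ min (E i / pτ * tstar) (q i) :=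
          le_min (hcnn i) (by linarith [hEpos i, hcnn i, (hxb i).1, (hxb i).2])
        nlinarith [hEpos i, mul_nonpos_of_nonneg_of_nonpos h1 h]
      · have h1 : min (E i / pτ * tstar) (q i) ≤ E i / pτ * tstar := min_le_left _ _
        have h2 : min (E i / pτ * tstar) (q i) * s ≤ E i / pτ * tstar * s :=
          mul_le_mul_of_nonneg_right h1 h.le
        have h3 : E i / pτ * tstar * s ≤ E i := by
          rw [div_mul_eq_mul_div, div_mul_eq_mul_div, div_le_iff₀ hpτ]
          nlinarith [hEpos i]
        linarith
    calc ∑ i, max ((q i - max (q i - E i / pτ * tstar) 0) * s - E i) 0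
        = 0 := by simp [hL]
      _ ≤ ∑ i, max ((q i - x i) * s - E i) 0 :=
          Finset.sum_nonneg fun i _ => le_max_right _ 0
  · push_neg at hs
    have hs0 : 0 < s := by nlinarith
    have hid : ∀ (Ei r : ℝ), max (r * s - Ei) 0 = max (-Ei) (-(s * r)) + s * r := by
      intro Ei r
      have h1 : (r * s - Ei) ⊔ 0 = (-Ei + s * r) ⊔ (-(s * r) + s * r) := by
        congr 1 <;> ring
      rw [h1, ← max_add_add_right]
    have key : ∀ (v : Fin n → ℝ), (∑ i, v i) = Q → (∀ i, 0 ≤ v i ∧ v i ≤ q i) →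
        ∑ i, max ((q i - v i) * s - E i) 0
          = (∑ i, max (-(E i)) (-(s * (q i - v i)))) + s * ((∑ i, q i) - Q) := by
      intro v hvs hvb
      calc ∑ i, max ((q i - v i) * s - E i) 0
          = ∑ i, (max (-(E i)) (-(s * (q i - v i))) + s * (q i - v i)) := by
            exact Finset.sum_congr rfl fun i _ => hid (E i) (q i - v i)
        _ = (∑ i, max (-(E i)) (-(s * (q i - v i)))) + ∑ i, s * (q i - v i) := by
            rw [Finset.sum_add_distrib]
        _ = (∑ i, max (-(E i)) (-(s * (q i - v i)))) + s * ((∑ i, q i) - Q) := by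
            rw [← Finset.mul_sum, Finset.sum_sub_distrib, hvs]
    have hWFs : (∑ i, (fun i => max (q i - E i / pτ * tstar) 0) i) = Q := htroot
    have hWFb : ∀ i, 0 ≤ max (q i - E i / pτ * tstar) 0 ∧
        max (q i - E i / pτ * tstar) 0 ≤ q i := by
      intro i
      exact ⟨le_max_right _ _, max_le (by linarith [hcnn i])
        (le_trans (hxb i).1 (hxb i).2)⟩
    rw [key _ hWFs hWFb, key x hxs hxb]
    have hterm : ∀ i, max (-(E i)) (-(s * (q i - max (q i - E i / pτ * tstar) 0)))
        ≤ max (-(E i)) (-(s * (q i - x i))) := by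
      intro i
      rw [hw i]
      rcases le_total (E i / pτ * tstar) (q i) with h | h
      · rw [min_eq_left h]
        have h1 : E i ≤ s * (E i / pτ * tstar) := by
          have h3 : s * (E i / pτ * tstar) = s * E i * tstar / pτ := by ring
          rw [h3, le_div_iff₀ hpτ]
          nlinarith [hEpos i]
        rw [max_eq_left (by linarith)]
        exact le_max_left _ _
      · rw [min_eq_right h]
        apply max_le_max le_rfl
        have := (hxb i).1
        nlinarith
    have := Finset.sum_le_sum (fun i (_ : i ∈ Finset.univ) => hterm i)
    linarith

set_option linter.unusedSectionVars false

variable {Ω : Type*} [MeasurableSpace Ω] (P : Measure Ω) [IsProbabilityMeasure P]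

lemma VaRset_bddBelow {Z : Ω → ℝ} (hZ0 : ∀ ω, 0 ≤ Z ω) {u : ℝ} (hu : 0 < u) :
    BddBelow {z : ℝ | u ≤ (P {ω | Z ω ≤ z}).toReal} := by
  refine ⟨0, fun z hz => ?_⟩
  by_contra h
  push_neg at h
  have he : {ω | Z ω ≤ z} = ∅ := by
    ext ω; simp only [mem_setOf_eq, mem_empty_iff_false, iff_false, not_le]
    exact lt_of_lt_of_le h (hZ0 ω)
  rw [mem_setOf_eq, he] at hz
  simp at hz
  linarith

lemma VaRset_nonempty {Z : Ω → ℝ} (hZm : Measurable Z) {u : ℝ} (hu0 : 0 ≤ u)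
    (hu : u < 1) : Set.Nonempty {z : ℝ | u ≤ (P {ω | Z ω ≤ z}).toReal} := by
  have hmono : Monotone (fun k : ℕ => {ω | Z ω ≤ (k : ℝ)}) := fun a b hab =>
    setOf_subset_setOf.mpr fun ω h => le_trans h (Nat.cast_le.mpr hab)
  have hU : (⋃ k : ℕ, {ω | Z ω ≤ (k : ℝ)}) = univ := by
    rw [eq_univ_iff_forall]
    intro ω
    obtain ⟨k, hk⟩ := exists_nat_ge (Z ω)
    exact mem_iUnion.mpr ⟨k, hk⟩
  have h1 : (1 : ENNReal) = ⨆ k : ℕ, P {ω | Z ω ≤ (k : ℝ)} := by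
    rw [← hmono.measure_iUnion, hU, measure_univ]
  have h2 : ENNReal.ofReal u < ⨆ k : ℕ, P {ω | Z ω ≤ (k : ℝ)} := by
    rw [← h1]
    exact ENNReal.ofReal_lt_one.mpr hu
  obtain ⟨k, hk⟩ := lt_iSup_iff.mp h2
  refine ⟨(k : ℝ), ?_⟩
  have h3 := ENNReal.toReal_mono (measure_ne_top P _) hk.le
  rwa [ENNReal.toReal_ofReal hu0] at h3

lemma VaR_le {Z : Ω → ℝ} (hZ0 : ∀ ω, 0 ≤ Z ω) {u t : ℝ} (hu : 0 < u)
    (h : u ≤ (P {ω | Z ω ≤ t}).toReal) : VaR P Z u ≤ t :=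
  csInf_le (VaRset_bddBelow P hZ0 hu) h

lemma VaR_nonneg {Z : Ω → ℝ} (hZ0 : ∀ ω, 0 ≤ Z ω) {u : ℝ} (hu : 0 < u) :
    0 ≤ VaR P Z u := by
  apply Real.sInf_nonneg
  intro z hz
  by_contra h
  push_neg at h
  have he : {ω | Z ω ≤ z} = ∅ := by
    ext ω; simp only [mem_setOf_eq, mem_empty_iff_false, iff_false, not_le]
    exact lt_of_lt_of_le h (hZ0 ω)
  rw [mem_setOf_eq, he] at hz
  simp at hz
  linarith

lemma VaR_mono_fun {Z1 Z2 : Ω → ℝ} (hZ12 : ∀ ω, Z1 ω ≤ Z2 ω)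
    (hZ10 : ∀ ω, 0 ≤ Z1 ω) (hZ2m : Measurable Z2) {u : ℝ} (hu0 : 0 < u)
    (hu1 : u < 1) : VaR P Z1 u ≤ VaR P Z2 u := by
  apply csInf_le_csInf (VaRset_bddBelow P hZ10 hu0)
    (VaRset_nonempty P hZ2m hu0.le hu1)
  intro z hz
  rw [mem_setOf_eq] at hz ⊢
  refine le_trans hz (ENNReal.toReal_mono (measure_ne_top P _) ?_)
  exact measure_mono fun ω h => le_trans (hZ12 ω) h

lemma VaR_integrableOn {Z : Ω → ℝ} (hZm : Measurable Z) (hZ0 : ∀ ω, 0 ≤ Z ω)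
    (hZint : Integrable Z P) {β : ℝ} (hβ0 : 0 < β) (hβ1 : β < 1) :
    IntegrableOn (fun u => VaR P Z u) (Set.Ioo β 1) volume := by
  have hmono : MonotoneOn (fun u => VaR P Z u) (Set.Ioo β 1) := by
    intro u hu v hv huv
    apply csInf_le_csInf (VaRset_bddBelow P hZ0 (lt_trans hβ0 hu.1))
      (VaRset_nonempty P hZm (le_trans hβ0.le (le_trans hu.1.le huv)) hv.2)
    intro z hz
    rw [mem_setOf_eq] at hz ⊢
    exact le_trans huv hz
  have hae : AEMeasurable (fun u => VaR P Z u) (volume.restrict (Ioo β 1)) :=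
    aemeasurable_restrict_of_monotoneOn measurableSet_Ioo hmono
  have hnn : 0 ≤ᵐ[volume.restrict (Ioo β 1)] fun u => VaR P Z u :=
    (ae_restrict_mem measurableSet_Ioo).mono fun u hu =>
      VaR_nonneg P hZ0 (lt_trans hβ0 hu.1)
  refine ⟨hae.aestronglyMeasurable, ?_⟩
  rw [hasFiniteIntegral_iff_ofReal hnn,
    lintegral_eq_lintegral_meas_lt _ hnn hae]
  have hbound : ∀ t : ℝ, 0 < t →
      (volume.restrict (Ioo β 1)) {u | t < VaR P Z u} ≤ P {ω | t < Z ω} := by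
    intro t ht
    rw [Measure.restrict_apply' measurableSet_Ioo]
    have hsub : {u | t < VaR P Z u} ∩ Ioo β 1
        ⊆ Ioo ((P {ω | Z ω ≤ t}).toReal) 1 := by
      rintro u ⟨hu1, hu2⟩
      refine ⟨?_, hu2.2⟩
      by_contra h
      push_neg at h
      exact absurd (VaR_le P hZ0 (lt_trans hβ0 hu2.1) h) (not_le.mpr hu1)
    calc volume ({u | t < VaR P Z u} ∩ Ioo β 1)
        ≤ volume (Ioo ((P {ω | Z ω ≤ t}).toReal) 1) := measure_mono hsub
      _ = ENNReal.ofReal (1 - (P {ω | Z ω ≤ t}).toReal) := Real.volume_Ioo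
      _ = P {ω | t < Z ω} := by
          have hc : {ω | t < Z ω} = {ω | Z ω ≤ t}ᶜ := by ext ω; simp
          have hms : MeasurableSet {ω | Z ω ≤ t} := hZm measurableSet_Iic
          rw [hc, prob_compl_eq_one_sub hms]
          have hle : P {ω | Z ω ≤ t} ≤ 1 := prob_le_one
          rw [show (1:ℝ) - (P {ω | Z ω ≤ t}).toReal
              = ((1 : ENNReal) - P {ω | Z ω ≤ t}).toReal by
            rw [ENNReal.toReal_sub_of_le hle (by simp), ENNReal.toReal_one]]
          exact ENNReal.ofReal_toReal (ne_top_of_le_ne_top (by simp) tsub_le_self)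
  calc ∫⁻ t in Ioi (0:ℝ), (volume.restrict (Ioo β 1)) {u | t < VaR P Z u}
      ≤ ∫⁻ t in Ioi (0:ℝ), P {ω | t < Z ω} := by
        apply lintegral_mono_ae
        exact (ae_restrict_mem measurableSet_Ioi).mono fun t ht => hbound t ht
    _ = ∫⁻ ω, ENNReal.ofReal (Z ω) ∂P :=
        (lintegral_eq_lintegral_meas_lt P (Filter.Eventually.of_forall hZ0)
          hZm.aemeasurable).symm
    _ ≤ ∫⁻ ω, (‖Z ω‖₊ : ENNReal) ∂P := by
        apply lintegral_mono
        intro ω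
        show ENNReal.ofReal (Z ω) ≤ (‖Z ω‖₊ : ENNReal)
        rw [← ENNReal.ofReal_coe_nnreal, coe_nnnorm, Real.norm_eq_abs]
        exact ENNReal.ofReal_le_ofReal (le_abs_self _)
    _ < ⊤ := hZint.2

lemma totalLoss_nonneg {n : ℕ} (q pe m : Fin n → ℝ) (pτ : ℝ)
    (x : Fin n → ℝ) (p : ℝ) : 0 ≤ totalLoss q pe m pτ x p :=
  Finset.sum_nonneg fun i _ => le_max_right _ 0

lemma totalLoss_continuous {n : ℕ} (q pe m : Fin n → ℝ) (pτ : ℝ)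
    (x : Fin n → ℝ) : Continuous (fun p => totalLoss q pe m pτ x p) := by
  unfold totalLoss shortfall equity
  exact continuous_finset_sum _ fun i _ =>
    Continuous.max (by continuity) continuous_const

lemma totalLoss_comp_integrable {n : ℕ} (q pe m : Fin n → ℝ) (pτ : ℝ)
    (x : Fin n → ℝ) {pT : Ω → ℝ} (hmeas : Measurable pT)
    (hint : Integrable pT P) :
    Integrable (fun ω => totalLoss q pe m pτ x (pT ω)) P := by
  have hg : Integrable (fun ω =>
      ∑ i, (|q i - x i| * (|pT ω| + |pτ|) + |q i * (pe i - pτ) + m i|)) P := by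
    apply integrable_finset_sum
    intro i _
    exact ((hint.abs.add (integrable_const |pτ|)).const_mul _).add
      (integrable_const _)
  refine hg.mono' ?_ ?_
  · exact ((totalLoss_continuous q pe m pτ x).measurable.comp hmeas)
      |>.aestronglyMeasurable
  · refine Filter.Eventually.of_forall fun ω => ?_
    rw [Real.norm_eq_abs, abs_of_nonneg (totalLoss_nonneg q pe m pτ x _)]
    unfold totalLoss
    apply Finset.sum_le_sum
    intro i _
    rw [shortfall_rw]
    apply max_le _ (by positivity)
    calc (q i - x i) * (pT ω - pτ) - (q i * (pe i - pτ) + m i)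
        ≤ |(q i - x i) * (pT ω - pτ)| + |q i * (pe i - pτ) + m i| := by
          have h1 := le_abs_self ((q i - x i) * (pT ω - pτ))
          have h2 := neg_abs_le (q i * (pe i - pτ) + m i)
          linarith
      _ = |q i - x i| * |pT ω - pτ| + |q i * (pe i - pτ) + m i| := by rw [abs_mul]
      _ ≤ |q i - x i| * (|pT ω| + |pτ|) + |q i * (pe i - pτ) + m i| := by
          have h3 : |pT ω - pτ| ≤ |pT ω| + |pτ| := by
            calc |pT ω - pτ| = |pT ω + -pτ| := by rw [sub_eq_add_neg]
              _ ≤ |pT ω| + |-pτ| := abs_add_le _ _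
              _ = |pT ω| + |pτ| := by rw [abs_neg]
          nlinarith [abs_nonneg (q i - x i)]

end Aux

/-- for every confidence level `β ∈ (0,1)`, the water-filling allocation
minimizes `x ↦ CVaR_β(L(x, p_T))` over the feasible set. -/
theorem waterfilling_CVaR_optimal {n : ℕ} [NeZero n] {Ω : Type*} [MeasurableSpace Ω]
    (P : Measure Ω) [IsProbabilityMeasure P]
    (q pe m : Fin n → ℝ) (pτ Q : ℝ)
    (hq : ∀ i, 0 < q i) (hm : ∀ i, 0 ≤ m i) (hpτ : 0 < pτ)
    (hQ0 : 0 < Q) (hQtop : Q < ∑ i, q i)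
    (E : Fin n → ℝ) (hE : ∀ i, E i = q i * (pe i - pτ) + m i) (hEpos : ∀ i, 0 < E i)
    (pT : Ω → ℝ) (hmeas : Measurable pT) (hint : Integrable pT P)
    (fT : ℝ → ℝ)
    (hdens : Measure.map pT P = volume.withDensity fun p => ENNReal.ofReal (fT p))
    (hfT : ∀ p, pτ ≤ p → 0 < fT p)
    (β : ℝ) (hβ : β ∈ Set.Ioo (0 : ℝ) 1)
    (tstar : ℝ) (htroot : (∑ i, max (q i - E i / pτ * tstar) 0) = Q)
    (xWF : Fin n → ℝ) (hxWF : ∀ i, xWF i = max (q i - E i / pτ * tstar) 0) :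
    ∀ x ∈ feas q Q,
      CVaR P (fun ω => totalLoss q pe m pτ xWF (pT ω)) β
        ≤ CVaR P (fun ω => totalLoss q pe m pτ x (pT ω)) β := by
  rintro x ⟨hxs, hxb⟩
  -- t⋆ is positive
  have ht : 0 < tstar := by
    by_contra h
    push_neg at h
    have hge : ∀ i ∈ Finset.univ, q i ≤ max (q i - E i / pτ * tstar) 0 := by
      intro i _
      have h1 : E i / pτ * tstar ≤ 0 :=
        mul_nonpos_of_nonneg_of_nonpos (div_nonneg (hEpos i).le hpτ.le) h
      exact le_trans (by linarith) (le_max_left _ _)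
    have := Finset.sum_le_sum hge
    rw [htroot] at this
    linarith
  -- pointwise domination of losses
  have hdom : ∀ p : ℝ, totalLoss q pe m pτ xWF p ≤ totalLoss q pe m pτ x p := by
    intro p
    have hrw : ∀ (v : Fin n → ℝ), totalLoss q pe m pτ v p
        = ∑ i, max ((q i - v i) * (p - pτ) - E i) 0 := by
      intro v
      unfold totalLoss
      refine Finset.sum_congr rfl fun i _ => ?_
      rw [shortfall_rw, hE i]
    rw [hrw, hrw]
    have := waterfill_pointwise q E pτ Q tstar hEpos hpτ ht htroot x hxs hxb (p - pτ)
    calc ∑ i, max ((q i - xWF i) * (p - pτ) - E i) 0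
        = ∑ i, max ((q i - max (q i - E i / pτ * tstar) 0) * (p - pτ) - E i) 0 := by
          refine Finset.sum_congr rfl fun i _ => ?_
          rw [hxWF i]
      _ ≤ ∑ i, max ((q i - x i) * (p - pτ) - E i) 0 := this
  set Z1 : Ω → ℝ := fun ω => totalLoss q pe m pτ xWF (pT ω) with hZ1
  set Z2 : Ω → ℝ := fun ω => totalLoss q pe m pτ x (pT ω) with hZ2
  have hZ10 : ∀ ω, 0 ≤ Z1 ω := fun ω => totalLoss_nonneg _ _ _ _ _ _
  have hZ20 : ∀ ω, 0 ≤ Z2 ω := fun ω => totalLoss_nonneg _ _ _ _ _ _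
  have hZ1m : Measurable Z1 :=
    (totalLoss_continuous q pe m pτ xWF).measurable.comp hmeas
  have hZ2m : Measurable Z2 :=
    (totalLoss_continuous q pe m pτ x).measurable.comp hmeas
  have hZ1int : Integrable Z1 P := totalLoss_comp_integrable P q pe m pτ xWF hmeas hint
  have hZ2int : Integrable Z2 P := totalLoss_comp_integrable P q pe m pτ x hmeas hint
  have hdomZ : ∀ ω, Z1 ω ≤ Z2 ω := fun ω => hdom (pT ω)
  -- interval integrability of the quantile functions
  have hII : ∀ (Z : Ω → ℝ), Measurable Z → (∀ ω, 0 ≤ Z ω) → Integrable Z P →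
      IntervalIntegrable (fun u => VaR P Z u) volume β 1 := by
    intro Z hZm hZ0 hZint
    rw [intervalIntegrable_iff, Set.uIoc_of_le hβ.2.le]
    have h1 : IntegrableOn (fun u => VaR P Z u) (Set.Ioo β 1) volume :=
      VaR_integrableOn P hZm hZ0 hZint hβ.1 hβ.2
    rwa [IntegrableOn, ← Measure.restrict_congr_set Ioo_ae_eq_Ioc]
  have hI1 := hII Z1 hZ1m hZ10 hZ1int
  have hI2 := hII Z2 hZ2m hZ20 hZ2int
  -- a.e. monotonicity of VaR on [β, 1]
  have hne : ∀ᵐ u ∂(volume : Measure ℝ), u ≠ 1 := by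
    rw [ae_iff]
    have : {u : ℝ | ¬u ≠ 1} = {1} := by ext u; simp
    rw [this]
    exact measure_singleton 1
  have haemono : (fun u => VaR P Z1 u)
      ≤ᵐ[volume.restrict (Set.Icc β 1)] fun u => VaR P Z2 u := by
    filter_upwards [ae_restrict_mem measurableSet_Icc, ae_restrict_of_ae hne]
      with u hu hune
    exact VaR_mono_fun P hdomZ hZ10 hZ2m (lt_of_lt_of_le hβ.1 hu.1)
      (lt_of_le_of_ne hu.2 hune)
  unfold CVaR
  apply mul_le_mul_of_nonneg_left _ (by rw [inv_nonneg]; linarith [hβ.2])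
  exact intervalIntegral.integral_mono_ae_restrict hβ.2.le hI1 hI2 haemono
end

section
/- Fix β ∈ (0,1) and set p_β := VaR_β(p_T), p̄_i(x_i) := max(p_β, p_i^(z)(x_i)), and h_β(x_i) := E[(p_T − p_τ) · 1{p_T ≥ p̄_i(x_i)}] for x_i ∈ [0, q_i]. Then a point x★ ∈ X minimizes x ↦ CVaR_β(L(x, p_T)) over X if and only if there exists θ★ ∈ ℝ such that for each i: 0 < x★_i < q_i implies h_β(x★_i) = θ★; x★_i = 0 implies h_β(0) ≤ θ★; and x★_i = q_i implies h_β(q_i) ≥ θ★. -/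
/-!
Since the law `μ` of `p_T` has no atoms, `u ↦ VaR_u(p_T)` pushes Lebesgue measure on `(β, 1)`
forward to `μ` restricted to `[p_β, ∞)`. The total loss is continuous and nondecreasing in the
price, so `(1 - β) CVaR_β(L(x, p_T)) = E[L(x, p_T); p_T ≥ p_β] = ∑ᵢ Gᵢ(xᵢ)` is separable.
Each shortfall is convex in `xᵢ` with subgradient `-(p - p_τ) 1{eᵢ ≤ 0}`; integrating over
`{p ≥ p_β}` shows that `-h_β(xᵢ)` is a subgradient of `Gᵢ` at `xᵢ`. Sufficiency of the KKT
conditions then follows from the subgradient inequality and `∑ᵢ (yᵢ - x★ᵢ) = 0`. Necessity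
comes from moving `ε` of allocation from an account `j` with `x★ⱼ > 0` to an account `i` with
`x★ᵢ < qᵢ` and letting `ε → 0`: this needs `h_β` continuous on `[0, qᵢ]`, which holds because
`μ` has no atoms and, as `Eᵢ > 0`, `p_i^(z)(xᵢ) → ∞` as `xᵢ → qᵢ`.
-/

open MeasureTheory

/-- Zero-equity (bankruptcy) price for `x_i < q_i`. -/
noncomputable def zeroEquityPrice (qi pei mi pτ xi : ℝ) : ℝ :=
  (qi * pei + mi - xi * pτ) / (qi - xi)

/-- The tail functional `h_β(x_i) = E[(p_T − p_τ) 1{p_T ≥ max(p_β, p_i^(z)(x_i))}]`,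
where `p_i^(z)(q_i) = +∞` so that `h_β(q_i) = 0`. -/
noncomputable def hBeta {Ω : Type*} [MeasurableSpace Ω] (P : Measure Ω)
    (pT : Ω → ℝ) (qi pei mi pτ pβ xi : ℝ) : ℝ :=
  if xi = qi then 0
  else ∫ ω in {ω | max pβ (zeroEquityPrice qi pei mi pτ xi) ≤ pT ω}, (pT ω - pτ) ∂P

open ProbabilityTheory Set Filter Topology

section Quantile

variable {μ : Measure ℝ} [IsProbabilityMeasure μ]

theorem measure_Ioc_eq_ofReal_cdf (a b : ℝ) :
    μ (Ioc a b) = ENNReal.ofReal (cdf μ b - cdf μ a) := by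
  conv_lhs => rw [← measure_cdf μ]
  exact (cdf μ).measure_Ioc a b

variable [NullSingletonClass μ] {u : ℝ}

theorem continuous_cdf : Continuous (cdf μ) := by
  refine continuous_iff_continuousAt.2 fun t => ?_
  refine (monotone_cdf μ).continuousAt_iff_leftLim_eq_rightLim.2 ?_
  have hjump := (cdf μ).measure_singleton t
  rw [measure_cdf, measure_singleton, eq_comm, ENNReal.ofReal_eq_zero] at hjump
  rw [StieltjesFunction.rightLim_eq]
  linarith [(monotone_cdf μ).leftLim_le le_rfl (x := t)]

theorem VaR_id_le_iff (hu0 : 0 < u) (hu1 : u < 1) (t : ℝ) :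
    VaR μ id u ≤ t ↔ u ≤ cdf μ t := by
  have hset : {z : ℝ | u ≤ (μ {ω | id ω ≤ z}).toReal} = cdf μ ⁻¹' Ici u := by
    ext z; simp [cdf_eq_real, measureReal_def, Iic]
  have hne : (cdf μ ⁻¹' Ici u).Nonempty :=
    ((tendsto_cdf_atTop μ).eventually (eventually_ge_nhds hu1)).exists
  have hbdd : BddBelow (cdf μ ⁻¹' Ici u) := by
    obtain ⟨s, hs⟩ :=
      ((tendsto_cdf_atBot μ).eventually (eventually_lt_nhds hu0)).exists_forall_of_atBot
    exact ⟨s, fun z hz => le_of_not_gt fun hzs => (hs z hzs.le).not_ge hz⟩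
  rw [VaR, hset]
  refine ⟨fun h => ?_, fun h => csInf_le hbdd h⟩
  exact le_trans ((isClosed_Ici.preimage continuous_cdf).csInf_mem hne hbdd) (monotone_cdf μ h)

theorem cdf_VaR_id (hu0 : 0 < u) (hu1 : u < 1) : cdf μ (VaR μ id u) = u := by
  refine le_antisymm ?_ ((VaR_id_le_iff hu0 hu1 _).1 le_rfl)
  have hlim : Tendsto (cdf μ) (𝓝[<] (VaR μ id u)) (𝓝 (cdf μ (VaR μ id u))) :=
    continuous_cdf.continuousAt.tendsto.mono_left nhdsWithin_le_nhds
  refine le_of_tendsto hlim (eventually_nhdsWithin_of_forall fun t ht => ?_)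
  exact le_of_not_ge fun h => (not_le.2 ht) ((VaR_id_le_iff hu0 hu1 t).2 h)

theorem VaR_comp_of_monotone {g : ℝ → ℝ} (hg : Monotone g) (hgc : Continuous g)
    (hu0 : 0 < u) (hu1 : u < 1) : VaR μ g u = g (VaR μ id u) := by
  set p := VaR μ id u
  refine IsLeast.csInf_eq
    ⟨?_, fun z (hz : u ≤ (μ {ω | g ω ≤ z}).toReal) => le_of_not_gt fun hlt => ?_⟩
  · show u ≤ (μ {ω | g ω ≤ g p}).toReal
    calc u ≤ cdf μ p := (VaR_id_le_iff hu0 hu1 p).1 le_rfl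
      _ = (μ (Iic p)).toReal := cdf_eq_real μ p
      _ ≤ (μ {ω | g ω ≤ g p}).toReal :=
        ENNReal.toReal_mono (measure_ne_top _ _) (measure_mono fun ω hω => hg hω)
  · obtain ⟨s, hsp, hs⟩ := exists_Ioc_subset_of_mem_nhds
      (hgc.isOpen_preimage _ isOpen_Ioi |>.mem_nhds hlt) (exists_lt p)
    have hsub : {ω | g ω ≤ z} ⊆ Iic s := fun ω (hω : g ω ≤ z) => le_of_not_gt fun hsω =>
      (le_total ω p).elim (fun hωp => (hs ⟨hsω, hωp⟩ : z < g ω).not_ge hω)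
        (fun hpω => hlt.not_ge ((hg hpω).trans hω))
    have : u ≤ cdf μ s := by
      rw [cdf_eq_real]
      exact hz.trans (ENNReal.toReal_mono (measure_ne_top _ _) (measure_mono hsub))
    exact hsp.not_ge ((VaR_id_le_iff hu0 hu1 s).2 this)

theorem monotoneOn_VaR_id {β : ℝ} (hβ0 : 0 < β) : MonotoneOn (VaR μ id) (Ioo β 1) :=
  fun _ hu _ hv huv => (VaR_id_le_iff (hβ0.trans hu.1) hu.2 _).2 <|
    huv.trans (cdf_VaR_id (hβ0.trans hv.1) hv.2).ge

theorem aemeasurable_VaR_id {β : ℝ} (hβ0 : 0 < β) :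
    AEMeasurable (VaR μ id) (volume.restrict (Ioo β 1)) :=
  aemeasurable_restrict_of_monotoneOn measurableSet_Ioo (monotoneOn_VaR_id hβ0)

theorem map_VaR_id_volume_restrict {β : ℝ} (hβ0 : 0 < β) (hβ1 : β < 1) :
    (volume.restrict (Ioo β 1)).map (VaR μ id) = μ.restrict (Ici (VaR μ id β)) := by
  -- both sides give `Iic t` the mass `(cdf μ t - β)⁺`
  refine Measure.ext_of_Iic _ _ fun t => ?_
  have hpre : VaR μ id ⁻¹' Iic t ∩ Ioo β 1 = Iic (cdf μ t) ∩ Ioo β 1 := by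
    ext u
    simp only [mem_inter_iff, mem_preimage, mem_Iic, and_congr_left_iff]
    exact fun hu => VaR_id_le_iff (hβ0.trans hu.1) hu.2 t
  rw [Measure.map_apply_of_aemeasurable (aemeasurable_VaR_id hβ0) measurableSet_Iic,
    Measure.restrict_apply' measurableSet_Ioo, hpre,
    measure_congr ((ae_eq_refl _).inter Ioo_ae_eq_Ioc), Iic_inter_Ioc_of_le (cdf_le_one μ t),
    Real.volume_Ioc, Measure.restrict_apply' measurableSet_Ici, Iic_inter_Ici,
    ← measure_congr Ioc_ae_eq_Icc, measure_Ioc_eq_ofReal_cdf, cdf_VaR_id hβ0 hβ1]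

theorem CVaR_eq_setIntegral {g : ℝ → ℝ} (hg : Monotone g) (hgc : Continuous g) {β : ℝ}
    (hβ0 : 0 < β) (hβ1 : β < 1) :
    CVaR μ g β = (1 - β)⁻¹ * ∫ p in Ici (VaR μ id β), g p ∂μ := by
  have hVaR : ∀ u ∈ Ioo β 1, VaR μ g u = g (VaR μ id u) :=
    fun u hu => VaR_comp_of_monotone hg hgc (hβ0.trans hu.1) hu.2
  rw [CVaR, intervalIntegral.integral_of_le hβ1.le, integral_Ioc_eq_integral_Ioo,
    setIntegral_congr_fun measurableSet_Ioo hVaR,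
    ← integral_map (aemeasurable_VaR_id hβ0) hgc.aestronglyMeasurable,
    map_VaR_id_volume_restrict hβ0 hβ1]

end Quantile

section Law

variable {Ω : Type*} [MeasurableSpace Ω] {P : Measure Ω} {Z : Ω → ℝ}

theorem VaR_comp_eq_VaR_map (hZ : AEMeasurable Z P) {g : ℝ → ℝ} (hg : Measurable g) (u : ℝ) :
    VaR P (fun ω => g (Z ω)) u = VaR (P.map Z) g u := by
  unfold VaR
  congr! 5 with z
  exact (Measure.map_apply_of_aemeasurable hZ (hg measurableSet_Iic)).symm

theorem CVaR_comp_eq_CVaR_map (hZ : AEMeasurable Z P) {g : ℝ → ℝ} (hg : Measurable g) (β : ℝ) :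
    CVaR P (fun ω => g (Z ω)) β = CVaR (P.map Z) g β := by
  simp only [CVaR, VaR_comp_eq_VaR_map hZ hg]

theorem hBeta_eq_hBeta_map (hZ : AEMeasurable Z P) (qi pei mi pτ pβ xi : ℝ) :
    hBeta P Z qi pei mi pτ pβ xi = hBeta (P.map Z) id qi pei mi pτ pβ xi := by
  unfold hBeta
  split_ifs
  · rfl
  · exact (setIntegral_map measurableSet_Ici
      (measurable_id.sub_const pτ).aestronglyMeasurable hZ).symm

end Law

section TailIntegral

variable {μ : Measure ℝ} {f : ℝ → ℝ}

theorem continuous_setIntegral_Ici [NullSingletonClass μ] (hf : Integrable f μ) :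
    Continuous fun c => ∫ p in Ici c, f p ∂μ := by
  simp_rw [← integral_indicator measurableSet_Ici]
  refine continuous_iff_continuousAt.2 fun c₀ => continuousAt_of_dominated
    (Eventually.of_forall fun c => hf.aestronglyMeasurable.indicator measurableSet_Ici)
    (Eventually.of_forall fun c => Eventually.of_forall fun p => norm_indicator_le_norm_self _ _)
    hf.norm ?_
  filter_upwards [Measure.ae_ne μ c₀] with p hp
  rcases hp.lt_or_gt with hlt | hgt
  · refine continuousAt_const.congr (f := fun _ => 0) ?_
    filter_upwards [eventually_gt_nhds hlt] with c hc
    exact (indicator_of_notMem (not_le.2 hc : p ∉ Ici c) f).symm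
  · refine continuousAt_const.congr (f := fun _ => f p) ?_
    filter_upwards [eventually_lt_nhds hgt] with c hc
    exact (indicator_of_mem (hc.le : p ∈ Ici c) f).symm

theorem tendsto_setIntegral_Ici_atTop (hf : Integrable f μ) :
    Tendsto (fun c => ∫ p in Ici c, f p ∂μ) atTop (𝓝 0) := by
  simp_rw [← integral_indicator measurableSet_Ici]
  rw [← integral_zero ℝ ℝ]
  refine tendsto_integral_filter_of_dominated_convergence _
    (Eventually.of_forall fun c => hf.aestronglyMeasurable.indicator measurableSet_Ici)
    (Eventually.of_forall fun c => Eventually.of_forall fun p => norm_indicator_le_norm_self _ _)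
    hf.norm (Eventually.of_forall fun p => tendsto_const_nhds.congr' ?_)
  filter_upwards [eventually_gt_atTop p] with c hc
  exact (indicator_of_notMem (not_le.2 hc : p ∉ Ici c) f).symm

end TailIntegral

theorem tendsto_div_sub_nhdsLT_atTop {E qi : ℝ} (hE : 0 < E) :
    Tendsto (fun x => E / (qi - x)) (𝓝[<] qi) atTop := by
  have h : Tendsto (fun x => qi - x) (𝓝[<] qi) (𝓝[>] 0) := by
    refine tendsto_nhdsWithin_iff.2 ⟨?_, eventually_nhdsWithin_of_forall
      fun x (hx : x < qi) => show 0 < qi - x from sub_pos.2 hx⟩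
    have : Tendsto (fun x => qi - x) (𝓝 qi) (𝓝 (qi - qi)) := tendsto_const_nhds.sub tendsto_id
    exact (sub_self qi ▸ this).mono_left nhdsWithin_le_nhds
  simpa [div_eq_mul_inv] using (tendsto_inv_nhdsGT_zero.comp h).const_mul_atTop hE

section Account

variable {qi pei mi pτ x : ℝ}

theorem equity_eq_mul_zeroEquityPrice_sub (hx : x ≠ qi) (p : ℝ) :
    equity qi pei mi pτ x p = (qi - x) * (zeroEquityPrice qi pei mi pτ x - p) := by
  have : qi - x ≠ 0 := sub_ne_zero.2 hx.symm
  rw [equity, zeroEquityPrice]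
  field_simp
  ring

theorem zeroEquityPrice_eq (hx : x ≠ qi) :
    zeroEquityPrice qi pei mi pτ x = pτ + (qi * (pei - pτ) + mi) / (qi - x) := by
  have : qi - x ≠ 0 := sub_ne_zero.2 hx.symm
  rw [zeroEquityPrice]
  field_simp
  ring

theorem setOf_equity_nonpos (hx : x < qi) :
    {p | equity qi pei mi pτ x p ≤ 0} = Ici (zeroEquityPrice qi pei mi pτ x) := by
  ext p
  simp only [mem_ofPred, equity_eq_mul_zeroEquityPrice_sub hx.ne, mem_Ici]
  constructor <;> intro h <;> nlinarith [sub_pos.2 hx]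

theorem setOf_equity_self_nonpos (hE : 0 < qi * (pei - pτ) + mi) :
    {p | equity qi pei mi pτ qi p ≤ 0} = ∅ := by
  refine eq_empty_of_forall_notMem fun p (hp : equity qi pei mi pτ qi p ≤ 0) => ?_
  have : equity qi pei mi pτ qi p = qi * (pei - pτ) + mi := by unfold equity; ring
  linarith

theorem shortfall_sub_le (y p : ℝ) :
    shortfall qi pei mi pτ x p
        - (y - x) * {p | equity qi pei mi pτ x p ≤ 0}.indicator (fun p => p - pτ) p
      ≤ shortfall qi pei mi pτ y p := by
  have hy : equity qi pei mi pτ y p = equity qi pei mi pτ x p + (y - x) * (p - pτ) := by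
    simp only [equity]; ring
  by_cases hx : equity qi pei mi pτ x p ≤ 0
  · rw [indicator_of_mem (show p ∈ {p | equity qi pei mi pτ x p ≤ 0} from hx), shortfall,
      shortfall, max_eq_left (neg_nonneg.2 hx), hy]
    exact le_max_of_le_left (by linarith)
  · rw [indicator_of_notMem (show p ∉ {p | equity qi pei mi pτ x p ≤ 0} from hx), mul_zero,
      sub_zero, shortfall, shortfall, max_eq_right (by linarith [not_le.1 hx])]
    exact le_max_right _ _

theorem monotone_shortfall (hx : x ≤ qi) : Monotone (shortfall qi pei mi pτ x) := by
  intro a b hab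
  refine max_le_max ?_ le_rfl
  simp only [equity]
  nlinarith

theorem continuous_shortfall : Continuous (shortfall qi pei mi pτ x) := by
  unfold shortfall equity
  fun_prop

theorem integrable_shortfall {μ : Measure ℝ} [IsFiniteMeasure μ] (hμ : Integrable id μ) :
    Integrable (shortfall qi pei mi pτ x) μ := by
  have : ∀ p, -equity qi pei mi pτ x p = (qi - x) * id p - (qi * pei + mi - x * pτ) := by
    intro p; unfold equity; simp only [id]; ring
  change Integrable (fun p => max (-equity qi pei mi pτ x p) 0) μ
  simp_rw [this]
  exact ((hμ.const_mul _).sub (integrable_const _)).pos_part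

end Account

section TailShortfall

variable {μ : Measure ℝ} {qi pei mi pτ pβ x : ℝ}

theorem hBeta_eq_setIntegral_indicator (hE : 0 < qi * (pei - pτ) + mi) (hx : x ≤ qi) :
    hBeta μ id qi pei mi pτ pβ x
      = ∫ p in Ici pβ, {p | equity qi pei mi pτ x p ≤ 0}.indicator (fun p => p - pτ) p ∂μ := by
  rcases hx.lt_or_eq with hx | rfl
  · rw [hBeta, if_neg hx.ne, setOf_equity_nonpos hx, setIntegral_indicator measurableSet_Ici,
      Ici_inter_Ici]
    rfl
  · rw [hBeta, if_pos rfl, setOf_equity_self_nonpos hE, indicator_empty, integral_zero]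

variable [IsFiniteMeasure μ]

theorem setIntegral_shortfall_sub_le (hμ : Integrable id μ) (hE : 0 < qi * (pei - pτ) + mi)
    (hx : x ≤ qi) (y : ℝ) :
    ∫ p in Ici pβ, shortfall qi pei mi pτ x p ∂μ - (y - x) * hBeta μ id qi pei mi pτ pβ x
      ≤ ∫ p in Ici pβ, shortfall qi pei mi pτ y p ∂μ := by
  have hset : MeasurableSet {p | equity qi pei mi pτ x p ≤ 0} :=
    measurableSet_le (by unfold equity; fun_prop) measurable_const
  have hind : Integrable ({p | equity qi pei mi pτ x p ≤ 0}.indicator (fun p => p - pτ)) μ :=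
    (hμ.sub (integrable_const pτ)).indicator hset
  rw [hBeta_eq_setIntegral_indicator hE hx, ← integral_const_mul,
    ← integral_sub (integrable_shortfall hμ).integrableOn (hind.const_mul _).integrableOn]
  exact setIntegral_mono ((integrable_shortfall hμ).sub (hind.const_mul _)).integrableOn
    (integrable_shortfall hμ).integrableOn fun p => shortfall_sub_le y p

theorem continuousOn_hBeta [NullSingletonClass μ] (hμ : Integrable id μ)
    (hE : 0 < qi * (pei - pτ) + mi) : ContinuousOn (hBeta μ id qi pei mi pτ pβ) (Iic qi) := by
  set K := fun c => ∫ p in Ici c, (p - pτ) ∂μ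
  have hK : Continuous K := continuous_setIntegral_Ici (hμ.sub (integrable_const pτ))
  have hEq : ∀ y < qi, hBeta μ id qi pei mi pτ pβ y
      = K (max pβ (pτ + (qi * (pei - pτ) + mi) / (qi - y))) := fun y hy => by
    rw [hBeta, if_neg hy.ne, zeroEquityPrice_eq hy.ne]
    rfl
  intro x (hx : x ≤ qi)
  rcases hx.lt_or_eq with hx | rfl
  · refine ContinuousAt.continuousWithinAt ?_
    refine ContinuousAt.congr ?_ (eventually_lt_nhds hx |>.mono fun y hy => (hEq y hy).symm)
    have : qi - x ≠ 0 := sub_ne_zero.2 hx.ne'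
    fun_prop (disch := assumption)
  · rw [← continuousWithinAt_Iio_iff_Iic, ContinuousWithinAt, hBeta, if_pos rfl]
    refine ((tendsto_setIntegral_Ici_atTop (hμ.sub (integrable_const pτ))).comp ?_).congr'
      (eventually_nhdsWithin_of_forall fun y hy => (hEq y hy).symm)
    exact tendsto_atTop_mono (fun _ => le_max_right _ _)
      (tendsto_atTop_add_const_left _ _ (tendsto_div_sub_nhdsLT_atTop hE))

end TailShortfall

section TotalLoss

variable {n : ℕ} {q pe m x : Fin n → ℝ} {pτ : ℝ}

theorem continuous_totalLoss : Continuous (totalLoss q pe m pτ x) :=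
  continuous_finsetSum _ fun _ _ => continuous_shortfall

theorem monotone_totalLoss (hx : ∀ i, x i ≤ q i) : Monotone (totalLoss q pe m pτ x) :=
  fun _ _ hab => Finset.sum_le_sum fun i _ => monotone_shortfall (hx i) hab

theorem CVaR_totalLoss_eq_sum {μ : Measure ℝ} [IsProbabilityMeasure μ] [NullSingletonClass μ]
    (hμ : Integrable id μ) {β : ℝ} (hβ0 : 0 < β) (hβ1 : β < 1) (hx : ∀ i, x i ≤ q i) :
    CVaR μ (totalLoss q pe m pτ x) β = (1 - β)⁻¹ *
      ∑ i, ∫ p in Ici (VaR μ id β), shortfall (q i) (pe i) (m i) pτ (x i) p ∂μ := by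
  rw [CVaR_eq_setIntegral (monotone_totalLoss hx) continuous_totalLoss hβ0 hβ1]
  unfold totalLoss
  rw [integral_finsetSum _ fun i _ => (integrable_shortfall hμ).integrableOn]

end TotalLoss

section SeparableConvex

theorem exists_forall_le_forall_ge {ι : Type*} [Finite ι] {A B : ι → Prop} {f g : ι → ℝ}
    (hfg : ∀ i j, A i → B j → f i ≤ g j) : ∃ θ, (∀ i, A i → f i ≤ θ) ∧ ∀ j, B j → θ ≤ g j := by
  by_cases hA : ∃ i, A i
  · obtain ⟨i₀, hi₀⟩ := hA
    have hbdd : BddAbove (f '' {i | A i}) := (toFinite _).bddAbove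
    exact ⟨sSup (f '' {i | A i}), fun i hi => le_csSup hbdd ⟨i, hi, rfl⟩,
      fun j hj => csSup_le ⟨f i₀, i₀, hi₀, rfl⟩ fun _ ⟨i, hi, hfi⟩ => hfi ▸ hfg i j hi hj⟩
  · obtain ⟨θ, hθ⟩ := (toFinite (g '' {j | B j})).bddBelow
    exact ⟨θ, fun i hi => (hA ⟨i, hi⟩).elim, fun j hj => hθ ⟨j, hj, rfl⟩⟩

variable {n : ℕ} {G h : Fin n → ℝ → ℝ} {q : Fin n → ℝ} {Q : ℝ} {x : Fin n → ℝ}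

theorem sum_le_sum_of_kkt
    (hsub : ∀ i, ∀ a ∈ Icc 0 (q i), ∀ b ∈ Icc 0 (q i), G i a - (b - a) * h i a ≤ G i b)
    (hx : x ∈ feas q Q) {θ : ℝ}
    (hθ : ∀ i, (0 < x i → x i < q i → h i (x i) = θ) ∧ (x i = 0 → h i 0 ≤ θ)
      ∧ (x i = q i → θ ≤ h i (q i)))
    {y : Fin n → ℝ} (hy : y ∈ feas q Q) : ∑ i, G i (x i) ≤ ∑ i, G i (y i) := by
  have hθi : ∀ i, (y i - x i) * h i (x i) ≤ (y i - x i) * θ := fun i => by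
    obtain ⟨hinterior, hlower, hupper⟩ := hθ i
    rcases (hx.2 i).1.lt_or_eq with hpos | hzero
    · rcases (hx.2 i).2.lt_or_eq with hlt | hcap
      · rw [hinterior hpos hlt]
      · rw [hcap]
        exact mul_le_mul_of_nonpos_left (hupper hcap) (by linarith [(hy.2 i).2])
    · rw [← hzero]
      exact mul_le_mul_of_nonneg_left (hlower hzero.symm) (by linarith [(hy.2 i).1])
  calc ∑ i, G i (x i) = ∑ i, (G i (x i) - (y i - x i) * θ) := by
        rw [Finset.sum_sub_distrib, ← Finset.sum_mul, Finset.sum_sub_distrib, hx.1, hy.1, sub_self,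
          zero_mul, sub_zero]
    _ ≤ ∑ i, (G i (x i) - (y i - x i) * h i (x i)) :=
        Finset.sum_le_sum fun i _ => sub_le_sub_left (hθi i) _
    _ ≤ ∑ i, G i (y i) :=
        Finset.sum_le_sum fun i _ => hsub i _ ⟨(hx.2 i).1, (hx.2 i).2⟩ _ ⟨(hy.2 i).1, (hy.2 i).2⟩

theorem apply_add_le_apply_sub_of_isMinOn (hx : x ∈ feas q Q)
    (hmin : IsMinOn (fun y => ∑ i, G i (y i)) (feas q Q) x)
    (hsub : ∀ i, ∀ a ∈ Icc 0 (q i), ∀ b ∈ Icc 0 (q i), G i a - (b - a) * h i a ≤ G i b)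
    {i j : Fin n} (hij : i ≠ j) {ε : ℝ} (hε : 0 < ε) (hεi : x i + ε ≤ q i) (hεj : ε ≤ x j) :
    h i (x i + ε) ≤ h j (x j - ε) := by
  set y := x + Pi.single i ε - Pi.single j ε
  have hyi : y i = x i + ε := by simp [y, hij]
  have hyj : y j = x j - ε := by simp [y, hij.symm]
  have hy : ∀ k, y k ∈ Icc 0 (q k) := fun k => by
    by_cases hki : k = i
    · subst hki; rw [hyi]; constructor <;> linarith [(hx.2 k).1]
    by_cases hkj : k = j
    · subst hkj; rw [hyj]; constructor <;> linarith [(hx.2 k).2]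
    simpa [y, Pi.single_eq_of_ne hki, Pi.single_eq_of_ne hkj] using hx.2 k
  have hyfeas : y ∈ feas q Q :=
    ⟨by simp [y, Finset.sum_add_distrib, Finset.sum_sub_distrib, hx.1], hy⟩
  have hopt : ∑ k, G k (x k) ≤ ∑ k, G k (y k) := isMinOn_iff.1 hmin y hyfeas
  have hconv : ∑ k, (G k (y k) - (x k - y k) * h k (y k)) ≤ ∑ k, G k (x k) :=
    Finset.sum_le_sum fun k _ => hsub k _ (hy k) _ ⟨(hx.2 k).1, (hx.2 k).2⟩
  have hlin : ∑ k, (x k - y k) * h k (y k) = ε * (h j (y j) - h i (y i)) := by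
    simp [y, sub_mul, add_mul, Finset.sum_sub_distrib, Finset.sum_add_distrib, Pi.single_apply,
      hij, hij.symm]
    ring
  rw [Finset.sum_sub_distrib, hlin] at hconv
  rw [← hyi, ← hyj]
  nlinarith

theorem le_of_isMinOn_of_lt_of_pos (hx : x ∈ feas q Q)
    (hmin : IsMinOn (fun y => ∑ i, G i (y i)) (feas q Q) x)
    (hsub : ∀ i, ∀ a ∈ Icc 0 (q i), ∀ b ∈ Icc 0 (q i), G i a - (b - a) * h i a ≤ G i b)
    (hcont : ∀ i, ContinuousOn (h i) (Icc 0 (q i)))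
    {i j : Fin n} (hij : i ≠ j) (hi : x i < q i) (hj : 0 < x j) : h i (x i) ≤ h j (x j) := by
  have hlim_i : Tendsto (fun ε => h i (x i + ε)) (𝓝[>] 0) (𝓝 (h i (x i))) := by
    refine (hcont i (x i) ⟨(hx.2 i).1, hi.le⟩).tendsto.comp (tendsto_nhdsWithin_iff.2 ⟨?_, ?_⟩)
    · exact ((continuous_const_add (x i)).tendsto' 0 (x i) (add_zero _)).mono_left
        nhdsWithin_le_nhds
    · filter_upwards [Ioo_mem_nhdsGT (sub_pos.2 hi)] with ε hε
      exact ⟨by linarith [(hx.2 i).1, hε.1], by linarith [hε.2]⟩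
  have hlim_j : Tendsto (fun ε => h j (x j - ε)) (𝓝[>] 0) (𝓝 (h j (x j))) := by
    refine (hcont j (x j) ⟨hj.le, (hx.2 j).2⟩).tendsto.comp (tendsto_nhdsWithin_iff.2 ⟨?_, ?_⟩)
    · exact ((continuous_sub_left (x j)).tendsto' 0 (x j) (sub_zero _)).mono_left
        nhdsWithin_le_nhds
    · filter_upwards [Ioo_mem_nhdsGT hj] with ε hε
      exact ⟨by linarith [hε.2], by linarith [(hx.2 j).2, hε.1]⟩
  refine le_of_tendsto_of_tendsto hlim_i hlim_j ?_
  filter_upwards [Ioo_mem_nhdsGT (lt_min (sub_pos.2 hi) hj)] with ε hε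
  exact apply_add_le_apply_sub_of_isMinOn hx hmin hsub hij hε.1
    (by linarith [hε.2.trans_le (min_le_left _ _)]) (hε.2.trans_le (min_le_right _ _)).le

theorem exists_kkt_of_isMinOn (hq : ∀ i, 0 < q i) (hx : x ∈ feas q Q)
    (hmin : IsMinOn (fun y => ∑ i, G i (y i)) (feas q Q) x)
    (hsub : ∀ i, ∀ a ∈ Icc 0 (q i), ∀ b ∈ Icc 0 (q i), G i a - (b - a) * h i a ≤ G i b)
    (hcont : ∀ i, ContinuousOn (h i) (Icc 0 (q i))) :
    ∃ θ, ∀ i, (0 < x i → x i < q i → h i (x i) = θ) ∧ (x i = 0 → h i 0 ≤ θ)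
      ∧ (x i = q i → θ ≤ h i (q i)) := by
  obtain ⟨θ, hbelow, habove⟩ := exists_forall_le_forall_ge (A := fun i => x i < q i)
    (B := fun j => 0 < x j) (f := fun i => h i (x i)) (g := fun i => h i (x i))
    fun i j hi hj => (eq_or_ne i j).elim (fun hij => hij ▸ le_rfl)
      fun hij => le_of_isMinOn_of_lt_of_pos hx hmin hsub hcont hij hi hj
  refine ⟨θ, fun i => ⟨fun hpos hlt => le_antisymm (hbelow i hlt) (habove i hpos),
    fun hzero => ?_, fun hcap => ?_⟩⟩
  · simpa [hzero] using hbelow i (by simpa [hzero] using hq i)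
  · simpa [hcap] using habove i (by simpa [hcap] using hq i)

theorem isMinOn_sum_iff_kkt (hq : ∀ i, 0 < q i) (hx : x ∈ feas q Q)
    (hsub : ∀ i, ∀ a ∈ Icc 0 (q i), ∀ b ∈ Icc 0 (q i), G i a - (b - a) * h i a ≤ G i b)
    (hcont : ∀ i, ContinuousOn (h i) (Icc 0 (q i))) :
    IsMinOn (fun y => ∑ i, G i (y i)) (feas q Q) x ↔
      ∃ θ, ∀ i, (0 < x i → x i < q i → h i (x i) = θ) ∧ (x i = 0 → h i 0 ≤ θ)
        ∧ (x i = q i → θ ≤ h i (q i)) :=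
  ⟨fun hmin => exists_kkt_of_isMinOn hq hx hmin hsub hcont,
    fun ⟨_, hθ⟩ => isMinOn_iff.2 fun _ hy => sum_le_sum_of_kkt hsub hx hθ hy⟩

end SeparableConvex

theorem CVaR_KKT_characterization_general {n : ℕ} {Ω : Type*} [MeasurableSpace Ω]
    (P : Measure Ω) [IsProbabilityMeasure P]
    (q pe m : Fin n → ℝ) (pτ Q : ℝ)
    (hq : ∀ i, 0 < q i)
    (E : Fin n → ℝ) (hE : ∀ i, E i = q i * (pe i - pτ) + m i) (hEpos : ∀ i, 0 < E i)
    (pT : Ω → ℝ) (hint : Integrable pT P)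
    (fT : ℝ → ℝ)
    (hdens : Measure.map pT P = volume.withDensity fun p => ENNReal.ofReal (fT p))
    (β : ℝ) (hβ : β ∈ Set.Ioo (0 : ℝ) 1)
    (xstar : Fin n → ℝ) (hxstar : xstar ∈ feas q Q) :
    (∀ x ∈ feas q Q,
      CVaR P (fun ω => totalLoss q pe m pτ xstar (pT ω)) β
        ≤ CVaR P (fun ω => totalLoss q pe m pτ x (pT ω)) β)
    ↔ ∃ θstar : ℝ, ∀ i,
        (0 < xstar i → xstar i < q i →
          hBeta P pT (q i) (pe i) (m i) pτ (VaR P pT β) (xstar i) = θstar)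
        ∧ (xstar i = 0 →
          hBeta P pT (q i) (pe i) (m i) pτ (VaR P pT β) 0 ≤ θstar)
        ∧ (xstar i = q i →
          θstar ≤ hBeta P pT (q i) (pe i) (m i) pτ (VaR P pT β) (q i)) := by
  obtain ⟨hβ0, hβ1⟩ := hβ
  have hpT : AEMeasurable pT P := hint.aemeasurable
  set μ := P.map pT
  have : IsProbabilityMeasure μ := Measure.isProbabilityMeasure_map hpT
  have : NullSingletonClass μ := hdens ▸ inferInstance
  have hμ : Integrable id μ := (integrable_map_measure aestronglyMeasurable_id hpT).2 hint
  have hEi : ∀ i, 0 < q i * (pe i - pτ) + m i := fun i => hE i ▸ hEpos i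
  have hVaR : VaR P pT β = VaR μ id β := VaR_comp_eq_VaR_map hpT measurable_id β
  have hCVaR : ∀ x ∈ feas q Q, CVaR P (fun ω => totalLoss q pe m pτ x (pT ω)) β
      = (1 - β)⁻¹ * ∑ i, ∫ p in Ici (VaR μ id β), shortfall (q i) (pe i) (m i) pτ (x i) p ∂μ :=
    fun x hx => by
      rw [CVaR_comp_eq_CVaR_map hpT continuous_totalLoss.measurable,
        CVaR_totalLoss_eq_sum hμ hβ0 hβ1 fun i => (hx.2 i).2]
  have hmin : (∀ x ∈ feas q Q, CVaR P (fun ω => totalLoss q pe m pτ xstar (pT ω)) β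
      ≤ CVaR P (fun ω => totalLoss q pe m pτ x (pT ω)) β) ↔ IsMinOn
        (fun x => ∑ i, ∫ p in Ici (VaR μ id β), shortfall (q i) (pe i) (m i) pτ (x i) p ∂μ)
        (feas q Q) xstar := by
    rw [isMinOn_iff]
    refine forall₂_congr fun x hx => ?_
    rw [hCVaR _ hxstar, hCVaR x hx, mul_le_mul_iff_right₀ (inv_pos.2 (sub_pos.2 hβ1))]
  rw [hmin]
  simp only [hVaR, hBeta_eq_hBeta_map hpT]
  exact isMinOn_sum_iff_kkt hq hxstar
    (fun i a ha b _ => setIntegral_shortfall_sub_le hμ (hEi i) ha.2 b)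
    fun i => (continuousOn_hBeta hμ (hEi i)).mono Icc_subset_Iic_self

/-- KKT characterization of CVaR-optimality: `x★ ∈ X` minimizes
`x ↦ CVaR_β(L(x, p_T))` over the feasible set if and only if there exists `θ★ ∈ ℝ` such
that for each `i`: interior coordinates satisfy `h_β(x★_i) = θ★`, coordinates at the
lower bound satisfy `h_β(0) ≤ θ★`, and coordinates at the upper bound satisfy
`h_β(q_i) ≥ θ★`. -/
theorem CVaR_KKT_characterization {n : ℕ} [NeZero n] {Ω : Type*} [MeasurableSpace Ω]
    (P : Measure Ω) [IsProbabilityMeasure P]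
    (q pe m : Fin n → ℝ) (pτ Q : ℝ)
    (hq : ∀ i, 0 < q i) (hm : ∀ i, 0 ≤ m i) (hpτ : 0 < pτ)
    (hQ0 : 0 < Q) (hQtop : Q < ∑ i, q i)
    (E : Fin n → ℝ) (hE : ∀ i, E i = q i * (pe i - pτ) + m i) (hEpos : ∀ i, 0 < E i)
    (pT : Ω → ℝ) (hmeas : Measurable pT) (hint : Integrable pT P)
    (fT : ℝ → ℝ)
    (hdens : Measure.map pT P = volume.withDensity fun p => ENNReal.ofReal (fT p))
    (hfT : ∀ p, pτ ≤ p → 0 < fT p)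
    (β : ℝ) (hβ : β ∈ Set.Ioo (0 : ℝ) 1)
    (xstar : Fin n → ℝ) (hxstar : xstar ∈ feas q Q) :
    (∀ x ∈ feas q Q,
      CVaR P (fun ω => totalLoss q pe m pτ xstar (pT ω)) β
        ≤ CVaR P (fun ω => totalLoss q pe m pτ x (pT ω)) β)
    ↔ ∃ θstar : ℝ, ∀ i,
        (0 < xstar i → xstar i < q i →
          hBeta P pT (q i) (pe i) (m i) pτ (VaR P pT β) (xstar i) = θstar)
        ∧ (xstar i = 0 →
          hBeta P pT (q i) (pe i) (m i) pτ (VaR P pT β) 0 ≤ θstar)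
        ∧ (xstar i = q i →
          θstar ≤ hBeta P pT (q i) (pe i) (m i) pτ (VaR P pT β) (q i)) :=
  CVaR_KKT_characterization_general P q pe m pτ Q hq E hE hEpos pT hint fT hdens β hβ xstar hxstar
end

section
/- Fix β ∈ (0,1), let x★ ∈ X minimize x ↦ CVaR_β(L(x, p_T)) over X, and define the stressed set D(x★) := {i : max(p_β, p_i^(z)(x★_i)) = p_β}. Suppose there exist indices i ≠ j in D(x★) and ε₀ > 0 such that for every ε ∈ [−ε₀, ε₀] the perturbed point x★(ε), defined by x★_i(ε) = x★_i + ε, x★_j(ε) = x★_j − ε, and x★_k(ε) = x★_k for k ∉ {i, j}, lies in X and satisfies i, j ∈ D(x★(ε)). Then x★(ε) minimizes x ↦ CVaR_β(L(x, p_T)) over X for every ε ∈ [−ε₀, ε₀]; in particular the set of minimizers contains a continuum. -/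
open MeasureTheory Topology

/-- Membership in the stressed set `D(x) = {i : max(p_β, p_i^(z)(x_i)) = p_β}`;
since `p_i^(z)(q_i) = +∞`, this is equivalent to `x_i < q_i ∧ p_i^(z)(x_i) ≤ p_β`. -/
def stressed {n : ℕ} (q pe m : Fin n → ℝ) (pτ pβ : ℝ) (x : Fin n → ℝ) (i : Fin n) : Prop :=
  x i < q i ∧ zeroEquityPrice (q i) (pe i) (m i) pτ (x i) ≤ pβ

section Aux

open Filter

lemma shortfall_mono (qi pei mi pτ xi : ℝ) (h : xi ≤ qi) :
    Monotone (fun p => shortfall qi pei mi pτ xi p) := by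
  intro a b hab
  simp only [shortfall, equity]
  refine max_le_max ?_ le_rfl
  nlinarith [mul_nonneg (sub_nonneg.2 h) (sub_nonneg.2 hab)]

lemma totalLoss_mono {n : ℕ} (q pe m : Fin n → ℝ) (pτ : ℝ) (x : Fin n → ℝ)
    (h : ∀ k, x k ≤ q k) : Monotone (fun p => totalLoss q pe m pτ x p) := by
  intro a b hab
  refine Finset.sum_le_sum fun k _ => ?_
  exact shortfall_mono _ _ _ _ _ (h k) hab

lemma shortfall_eq_of_stressed (qi pei mi pτ xi p : ℝ) (h1 : xi < qi)
    (h2 : zeroEquityPrice qi pei mi pτ xi ≤ p) :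
    shortfall qi pei mi pτ xi p = (qi - xi) * p - (qi * pei + mi - xi * pτ) := by
  have hd : 0 < qi - xi := sub_pos.2 h1
  rw [zeroEquityPrice, div_le_iff₀ hd] at h2
  simp only [shortfall, equity]
  rw [max_eq_left (by nlinarith)]
  ring

lemma measure_lt_VaR {Ω : Type*} [MeasurableSpace Ω] (P : Measure Ω) [IsProbabilityMeasure P]
    (pT : Ω → ℝ) (hmeas : Measurable pT) (β : ℝ) (hβ : 0 < β) :
    P {ω | pT ω < VaR P pT β} ≤ ENNReal.ofReal β := by
  -- the level sets are eventually small
  have htail : ∃ k : ℕ, (P {ω | pT ω ≤ -(k : ℝ)}).toReal < β := by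
    have hanti : Antitone fun k : ℕ => {ω | pT ω ≤ -(k : ℝ)} := by
      intro a b hab ω hω
      simp only [Set.mem_setOf_eq] at hω ⊢
      have : -(b : ℝ) ≤ -(a : ℝ) := by exact_mod_cast neg_le_neg (by exact_mod_cast hab)
      linarith
    have hempty : (⋂ k : ℕ, {ω | pT ω ≤ -(k : ℝ)}) = (∅ : Set Ω) := by
      ext ω
      simp only [Set.mem_iInter, Set.mem_setOf_eq, Set.mem_empty_iff_false, iff_false, not_forall]
      obtain ⟨k, hk⟩ := exists_nat_gt (-pT ω)
      exact ⟨k, by push_neg; linarith⟩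
    have htend : Tendsto (fun k : ℕ => P {ω | pT ω ≤ -(k : ℝ)}) atTop (𝓝 0) := by
      have := tendsto_measure_iInter_atTop (μ := P)
        (s := fun k : ℕ => {ω | pT ω ≤ -(k : ℝ)})
        (fun k => (hmeas measurableSet_Iic).nullMeasurableSet) hanti
        ⟨0, measure_ne_top _ _⟩
      rwa [hempty, measure_empty] at this
    have hev : ∀ᶠ k : ℕ in atTop, P {ω | pT ω ≤ -(k : ℝ)} < ENNReal.ofReal β :=
      htend.eventually_lt_const (ENNReal.ofReal_pos.2 hβ)
    obtain ⟨k, hk⟩ := hev.exists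
    exact ⟨k, by
      have := ENNReal.toReal_lt_of_lt_ofReal hk
      exact this⟩
  obtain ⟨k₀, hk₀⟩ := htail
  -- the VaR set is bounded below
  have hFmono : ∀ a b : ℝ, a ≤ b →
      (P {ω | pT ω ≤ a}).toReal ≤ (P {ω | pT ω ≤ b}).toReal := by
    intro a b hab
    exact ENNReal.toReal_mono (measure_ne_top _ _)
      (measure_mono fun ω hω => le_trans hω hab)
  have hbdd : BddBelow {z : ℝ | β ≤ (P {ω | pT ω ≤ z}).toReal} := by
    refine ⟨-(k₀ : ℝ), fun z hz => ?_⟩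
    by_contra hlt
    push_neg at hlt
    exact absurd (le_trans hz (hFmono _ _ hlt.le)) (not_le.2 hk₀)
  set c := VaR P pT β with hc
  have hkey : ∀ δ : ℝ, 0 < δ → (P {ω | pT ω ≤ c - δ}).toReal < β := by
    intro δ hδ
    by_contra hcon
    push_neg at hcon
    have : c ≤ c - δ := csInf_le hbdd hcon
    linarith
  have hmono : Monotone fun k : ℕ => {ω | pT ω ≤ c - 1 / ((k : ℝ) + 1)} := by
    intro a b hab ω hω
    simp only [Set.mem_setOf_eq] at hω ⊢
    have h1 : (0:ℝ) < (a : ℝ) + 1 := by positivity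
    have h2 : ((a : ℝ) + 1) ≤ ((b : ℝ) + 1) := by
      have : (a : ℝ) ≤ b := by exact_mod_cast hab
      linarith
    have := one_div_le_one_div_of_le h1 h2
    linarith
  have hU : {ω | pT ω < c} = ⋃ k : ℕ, {ω | pT ω ≤ c - 1 / ((k : ℝ) + 1)} := by
    ext ω
    simp only [Set.mem_setOf_eq, Set.mem_iUnion]
    constructor
    · intro h
      obtain ⟨k, hk⟩ := exists_nat_one_div_lt (sub_pos.2 h)
      exact ⟨k, by linarith⟩
    · rintro ⟨k, hk⟩
      have : (0:ℝ) < 1 / ((k : ℝ) + 1) := by positivity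
      linarith
  rw [hU, hmono.measure_iUnion]
  refine iSup_le fun k => ?_
  have h := hkey (1 / ((k : ℝ) + 1)) (by positivity)
  exact (ENNReal.le_ofReal_iff_toReal_le (measure_ne_top _ _)
    (le_trans ENNReal.toReal_nonneg h.le)).2 h.le

lemma VaR_congr_aux {Ω : Type*} [MeasurableSpace Ω] (P : Measure Ω) [IsProbabilityMeasure P]
    (pT : Ω → ℝ) (g g' : ℝ → ℝ) (c β u : ℝ) (hβu : β < u) (hβ0 : 0 ≤ β)
    (hg : Monotone g) (hg' : Monotone g')
    (heq : ∀ p, c ≤ p → g p = g' p)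
    (hc : P {ω | pT ω < c} ≤ ENNReal.ofReal β)
    {z : ℝ} (hz : u ≤ (P {ω | g (pT ω) ≤ z}).toReal) :
    u ≤ (P {ω | g' (pT ω) ≤ z}).toReal := by
  by_cases hzc : g c ≤ z
  · have hsets : {ω | g (pT ω) ≤ z} = {ω | g' (pT ω) ≤ z} := by
      ext ω
      rcases le_or_gt c (pT ω) with h | h
      · simp [Set.mem_setOf_eq, heq _ h]
      · have h1 : g (pT ω) ≤ z := (hg h.le).trans hzc
        have h2 : g' (pT ω) ≤ z := by
          have := hg' h.le
          rw [← heq c le_rfl] at this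
          exact this.trans hzc
        simp [Set.mem_setOf_eq, h1, h2]
    rwa [hsets] at hz
  · exfalso
    push_neg at hzc
    have hsub : {ω | g (pT ω) ≤ z} ⊆ {ω | pT ω < c} := by
      intro ω hω
      by_contra hge
      simp only [Set.mem_setOf_eq, not_lt] at hge
      exact absurd (le_trans (hg hge) hω) (not_le.2 hzc)
    have hle : (P {ω | g (pT ω) ≤ z}).toReal ≤ β := by
      have h1 := (measure_mono hsub).trans hc
      calc (P {ω | g (pT ω) ≤ z}).toReal
          ≤ (ENNReal.ofReal β).toReal := ENNReal.toReal_mono ENNReal.ofReal_ne_top h1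
        _ = β := ENNReal.toReal_ofReal hβ0
    linarith

lemma VaR_congr {Ω : Type*} [MeasurableSpace Ω] (P : Measure Ω) [IsProbabilityMeasure P]
    (pT : Ω → ℝ) (g g' : ℝ → ℝ) (c β u : ℝ) (hβu : β < u) (hβ0 : 0 ≤ β)
    (hg : Monotone g) (hg' : Monotone g')
    (heq : ∀ p, c ≤ p → g p = g' p)
    (hc : P {ω | pT ω < c} ≤ ENNReal.ofReal β) :
    VaR P (fun ω => g (pT ω)) u = VaR P (fun ω => g' (pT ω)) u := by
  unfold VaR
  congr 1
  ext z
  exact ⟨fun h => VaR_congr_aux P pT g g' c β u hβu hβ0 hg hg' heq hc h,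
    fun h => VaR_congr_aux P pT g' g c β u hβu hβ0 hg' hg
      (fun p hp => (heq p hp).symm) hc h⟩

end Aux

/-- non-uniqueness of CVaR optima: redistributions of buyback between two
stressed accounts that remain feasible and stressed preserve CVaR-optimality; in
particular the set of minimizers contains a continuum. -/
theorem CVaR_perturbation_optimal {n : ℕ} [NeZero n] {Ω : Type*} [MeasurableSpace Ω]
    (P : Measure Ω) [IsProbabilityMeasure P]
    (q pe m : Fin n → ℝ) (pτ Q : ℝ)
    (hq : ∀ i, 0 < q i) (hm : ∀ i, 0 ≤ m i) (hpτ : 0 < pτ)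
    (hQ0 : 0 < Q) (hQtop : Q < ∑ i, q i)
    (E : Fin n → ℝ) (hE : ∀ i, E i = q i * (pe i - pτ) + m i) (hEpos : ∀ i, 0 < E i)
    (pT : Ω → ℝ) (hmeas : Measurable pT) (hint : Integrable pT P)
    (fT : ℝ → ℝ)
    (hdens : Measure.map pT P = volume.withDensity fun p => ENNReal.ofReal (fT p))
    (hfT : ∀ p, pτ ≤ p → 0 < fT p)
    (β : ℝ) (hβ : β ∈ Set.Ioo (0 : ℝ) 1)
    (xstar : Fin n → ℝ) (hxstar : xstar ∈ feas q Q)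
    (hopt : ∀ x ∈ feas q Q,
      CVaR P (fun ω => totalLoss q pe m pτ xstar (pT ω)) β
        ≤ CVaR P (fun ω => totalLoss q pe m pτ x (pT ω)) β)
    (i j : Fin n) (hij : i ≠ j)
    (hiD : stressed q pe m pτ (VaR P pT β) xstar i)
    (hjD : stressed q pe m pτ (VaR P pT β) xstar j)
    (ε₀ : ℝ) (hε₀ : 0 < ε₀)
    (pert : ℝ → Fin n → ℝ)
    (hpert : ∀ ε k, pert ε k =
      if k = i then xstar i + ε else if k = j then xstar j - ε else xstar k)
    (hfeas : ∀ ε ∈ Set.Icc (-ε₀) ε₀, pert ε ∈ feas q Q)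
    (hstress : ∀ ε ∈ Set.Icc (-ε₀) ε₀,
      stressed q pe m pτ (VaR P pT β) (pert ε) i
      ∧ stressed q pe m pτ (VaR P pT β) (pert ε) j) :
    (∀ ε ∈ Set.Icc (-ε₀) ε₀, ∀ x ∈ feas q Q,
      CVaR P (fun ω => totalLoss q pe m pτ (pert ε) (pT ω)) β
        ≤ CVaR P (fun ω => totalLoss q pe m pτ x (pT ω)) β)
    ∧ Set.InjOn pert (Set.Icc (-ε₀) ε₀) := by
  constructor
  · intro ε hε x hx
    -- it suffices to show CVaR is unchanged by the perturbation
    have hpi : pert ε i = xstar i + ε := by rw [hpert]; simp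
    have hpj : pert ε j = xstar j - ε := by
      rw [hpert, if_neg (Ne.symm hij), if_pos rfl]
    set pβ := VaR P pT β with hpβ
    obtain ⟨hsi, hsj⟩ := hstress ε hε
    -- totalLoss agrees above pβ
    have hsum : ∀ f : Fin n → ℝ,
        ∑ k, f k = (∑ k ∈ (Finset.univ.erase i).erase j, f k) + f j + f i := by
      intro f
      have hji : j ∈ Finset.univ.erase i := Finset.mem_erase.2 ⟨Ne.symm hij, Finset.mem_univ j⟩
      rw [← Finset.sum_erase_add Finset.univ f (Finset.mem_univ i),
        ← Finset.sum_erase_add (Finset.univ.erase i) f hji]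
    have hLeq : ∀ p, pβ ≤ p →
        totalLoss q pe m pτ (pert ε) p = totalLoss q pe m pτ xstar p := by
      intro p hp
      unfold totalLoss
      rw [hsum fun k => shortfall (q k) (pe k) (m k) pτ (pert ε k) p,
        hsum fun k => shortfall (q k) (pe k) (m k) pτ (xstar k) p]
      have hrest : ∑ k ∈ (Finset.univ.erase i).erase j,
          shortfall (q k) (pe k) (m k) pτ (pert ε k) p
          = ∑ k ∈ (Finset.univ.erase i).erase j,
          shortfall (q k) (pe k) (m k) pτ (xstar k) p := by
        refine Finset.sum_congr rfl fun k hk => ?_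
        have h1 := Finset.mem_erase.1 hk
        have h2 := Finset.mem_erase.1 h1.2
        rw [hpert, if_neg h2.1, if_neg h1.1]
      rw [hrest,
        shortfall_eq_of_stressed _ _ _ _ _ _ hsj.1 (hsj.2.trans hp),
        shortfall_eq_of_stressed _ _ _ _ _ _ hsi.1 (hsi.2.trans hp),
        shortfall_eq_of_stressed _ _ _ _ _ _ hjD.1 (hjD.2.trans hp),
        shortfall_eq_of_stressed _ _ _ _ _ _ hiD.1 (hiD.2.trans hp),
        hpi, hpj]
      ring
    have hmono1 : Monotone (fun p => totalLoss q pe m pτ (pert ε) p) :=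
      totalLoss_mono q pe m pτ (pert ε) fun k => ((hfeas ε hε).2 k).2
    have hmono2 : Monotone (fun p => totalLoss q pe m pτ xstar p) :=
      totalLoss_mono q pe m pτ xstar fun k => (hxstar.2 k).2
    have hcmeas := measure_lt_VaR P pT hmeas β hβ.1
    have hCeq : CVaR P (fun ω => totalLoss q pe m pτ (pert ε) (pT ω)) β
        = CVaR P (fun ω => totalLoss q pe m pτ xstar (pT ω)) β := by
      unfold CVaR
      congr 1
      refine intervalIntegral.integral_congr_ae (Filter.Eventually.of_forall fun u hu => ?_)
      rw [Set.uIoc_of_le hβ.2.le] at hu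
      exact VaR_congr P pT _ _ pβ β u hu.1 hβ.1.le hmono1 hmono2 hLeq hcmeas
    rw [hCeq]
    exact hopt x hx
  · intro a _ b _ hab
    have := congrFun hab i
    rw [hpert a i, hpert b i, if_pos rfl, if_pos rfl] at this
    linarith
end

section
/- In the multi-asset cross-margin setting: (i) the program of minimizing x ↦ E[L(x, p_T)] over X is a convex program (the objective is a finite convex function on X) and admits an optimal allocation; (ii) an allocation x★ = (x★_1, …, x★_n) ∈ (ℝ^d)^n is optimal if and only if there exists λ★ ∈ ℝ^d such that for every i, x★_i minimizes x_i ↦ E[σ_i(x_i, p_T)] + λ★·x_i over Y_i, and ∑_{i=1}^n x★_i = Q; (iii) any such λ★ maximizes the dual function g(λ) := −λ·Q + ∑_{i=1}^n min_{x_i ∈ Y_i} {E[σ_i(x_i, p_T)] + λ·x_i} over λ ∈ ℝ^d. -/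
open MeasureTheory

/-- Lower directional bound for a position `qik` in an asset with target reduction `Qk`. -/
noncomputable def lB (Qk qik : ℝ) : ℝ := if 0 ≤ Qk then 0 else min 0 qik

/-- Upper directional bound for a position `qik` in an asset with target reduction `Qk`. -/
noncomputable def uB (Qk qik : ℝ) : ℝ := if 0 < Qk then max 0 qik else 0

/-- Per-account feasible box `Y_i`. -/
def boxY {d : ℕ} (Q qi : Fin d → ℝ) : Set (Fin d → ℝ) :=
  {xi | ∀ k, lB (Q k) (qi k) ≤ xi k ∧ xi k ≤ uB (Q k) (qi k)}

/-- The multi-asset feasible set `X`. -/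
def feasX {d n : ℕ} (Q : Fin d → ℝ) (q : Fin n → Fin d → ℝ) :
    Set (Fin n → Fin d → ℝ) :=
  {x | (∀ k, (∑ i, x i k) = Q k) ∧ ∀ i, x i ∈ boxY Q (q i)}

/-- Per-account shortfall in the multi-asset cross-margin setting. -/
noncomputable def shortfallM {d : ℕ} (Ei : ℝ) (qi pτ xi p : Fin d → ℝ) : ℝ :=
  max (-(Ei + ∑ k, (qi k - xi k) * (pτ k - p k))) 0

lemma exists_subgradient_aux {d : ℕ} (v : (Fin d → ℝ) → ℝ) (hconv : ConvexOn ℝ Set.univ v)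
    (hcont : Continuous v) (Q : Fin d → ℝ) :
    ∃ lam : Fin d → ℝ, ∀ b, v Q + ∑ k, lam k * (b k - Q k) ≤ v b := by
  classical
  set s : Set ((Fin d → ℝ) × ℝ) := {p | v p.1 < p.2} with hs
  have hsopen : IsOpen s :=
    isOpen_lt (hcont.comp continuous_fst) continuous_snd
  have hsconv : Convex ℝ s := by
    rintro ⟨b1, t1⟩ h1 ⟨b2, t2⟩ h2 a b ha hb hab
    simp only [s, Set.mem_setOf_eq] at h1 h2 ⊢
    have hle : v (a • b1 + b • b2) ≤ a * v b1 + b * v b2 := by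
      have := hconv.2 (Set.mem_univ b1) (Set.mem_univ b2) ha hb hab
      simpa using this
    have hlt : a * v b1 + b * v b2 < a * t1 + b * t2 := by
      rcases eq_or_lt_of_le ha with rfl | ha'
      · have hb1 : b = 1 := by linarith
        subst hb1; simpa using h2
      · have h1' : a * v b1 < a * t1 := by nlinarith
        have h2' : b * v b2 ≤ b * t2 := by nlinarith
        linarith
    calc v ((a • (b1, t1) + b • (b2, t2) : (Fin d → ℝ) × ℝ)).1
        = v (a • b1 + b • b2) := rfl
      _ < a * t1 + b * t2 := lt_of_le_of_lt hle hlt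
      _ = (a • (b1, t1) + b • (b2, t2) : (Fin d → ℝ) × ℝ).2 := by simp
  have hnot : (Q, v Q) ∉ s := by simp [s]
  obtain ⟨L, hL⟩ := geometric_hahn_banach_open_point hsconv hsopen hnot
  set c : ℝ := L (0, 1) with hc
  have hkey : ∀ b t, v b < t → L (b, t) < L (Q, v Q) := fun b t h => hL _ h
  have hlin : ∀ (b : Fin d → ℝ) (t s' : ℝ), L (b, t + s') = L (b, t) + s' * c := by
    intro b t s'
    have h : ((b, t + s') : (Fin d → ℝ) × ℝ) = (b, t) + s' • ((0 : Fin d → ℝ), (1:ℝ)) := by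
      simp [Prod.ext_iff]
    rw [h, map_add, L.map_smul, smul_eq_mul, hc]
  have hcneg : c < 0 := by
    have h1 : L (Q, v Q + 1) < L (Q, v Q) := hkey Q (v Q + 1) (by linarith)
    rw [hlin Q (v Q) 1] at h1; linarith
  have hsupp : ∀ b, L (b, v b) ≤ L (Q, v Q) := by
    intro b
    by_contra h
    push_neg at h
    set δ := L (b, v b) - L (Q, v Q) with hδ
    have hδpos : 0 < δ := by linarith
    set ε := δ / (2 * (-c)) with hε
    have hεpos : 0 < ε := by
      rw [hε]; apply div_pos hδpos (by linarith)
    have h2 : L (b, v b + ε) < L (Q, v Q) := hkey _ _ (by linarith)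
    rw [hlin] at h2
    have hεc : ε * c = -δ / 2 := by
      have h3 : ε * (2 * -c) = δ := by rw [hε]; exact div_mul_cancel₀ _ (by linarith)
      nlinarith [h3]
    rw [hεc] at h2
    linarith
  refine ⟨fun k => -(L (Pi.single k 1, 0) / c), fun b => ?_⟩
  have hexp : ∀ (b : Fin d → ℝ) (t : ℝ),
      L (b, t) = (∑ k, b k * L (Pi.single k 1, 0)) + t * c := by
    intro b t
    have hb : ((b, t) : (Fin d → ℝ) × ℝ)
        = (∑ k, b k • ((Pi.single k 1 : Fin d → ℝ), (0:ℝ))) + t • ((0 : Fin d → ℝ), (1:ℝ)) := by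
      rw [Prod.ext_iff]
      constructor
      · simp only [Prod.fst_add, Prod.fst_sum, Prod.smul_fst, Prod.smul_snd, Prod.snd_add]
        simp only [smul_eq_mul, Pi.smul_def]
        funext j
        simp [Finset.sum_apply, Pi.single_apply, Finset.sum_ite_eq]
      · simp [Prod.snd_sum]
    rw [hb, map_add, map_sum, L.map_smul, smul_eq_mul, hc]
    congr 1
    · congr 1; funext k; rw [L.map_smul, smul_eq_mul]
  have h1 := hsupp b
  rw [hexp b (v b), hexp Q (v Q)] at h1
  set Sb := ∑ k, b k * L (Pi.single k 1, 0) with hSb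
  set SQ := ∑ k, Q k * L (Pi.single k 1, 0) with hSQ
  have hS : ∑ k, (-(L (Pi.single k 1, 0) / c)) * (b k - Q k) = (SQ - Sb) / c := by
    rw [hSb, hSQ, ← Finset.sum_sub_distrib, Finset.sum_div]
    congr 1; funext k; ring
  rw [hS]
  have h2 : (SQ - Sb) / c ≤ v b - v Q := by
    rw [div_le_iff_of_neg hcneg]; nlinarith
  linarith

lemma transport_aux {n : ℕ} (l u x : Fin n → ℝ) (hlx : ∀ i, l i ≤ x i) (hxu : ∀ i, x i ≤ u i)
    (T : ℝ) (hlT : (∑ i, l i) ≤ T) (hTu : T ≤ ∑ i, u i) :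
    ∃ y : Fin n → ℝ, (∀ i, l i ≤ y i) ∧ (∀ i, y i ≤ u i) ∧ (∑ i, y i) = T ∧
      (∑ i, |y i - x i|) ≤ |(∑ i, x i) - T| := by
  classical
  set s := ∑ i, x i with hsum
  rcases le_total s T with hsT | hTs
  · -- move up towards u
    have hsu : s ≤ ∑ i, u i := Finset.sum_le_sum fun i _ => hxu i
    by_cases heq : (∑ i, u i) = s
    · have hTs' : T = s := le_antisymm (hTu.trans heq.le) hsT
      exact ⟨x, hlx, hxu, by rw [← hsum, hTs'], by simp⟩
    · have hlt : s < ∑ i, u i := lt_of_le_of_ne hsu (Ne.symm heq)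
      set r := (T - s) / (∑ i, u i - s) with hr
      have hr0 : 0 ≤ r := div_nonneg (by linarith) (by linarith)
      have hr1 : r ≤ 1 := by
        rw [hr, div_le_one (by linarith)]; linarith
      have hD : ((∑ i, u i) - s) ≠ 0 := by linarith
      have h5 : r * ((∑ i, u i) - s) = T - s := by
        rw [hr, div_mul_cancel₀ _ hD]
      refine ⟨fun i => x i + r * (u i - x i), fun i => ?_, fun i => ?_, ?_, ?_⟩
      · dsimp only
        have : 0 ≤ r * (u i - x i) := mul_nonneg hr0 (by linarith [hxu i])
        linarith [hlx i]
      · dsimp only; nlinarith [hxu i]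
      · rw [Finset.sum_add_distrib, ← Finset.mul_sum, Finset.sum_sub_distrib, ← hsum, h5]
        ring
      · have habs : ∀ i, |x i + r * (u i - x i) - x i| = r * (u i - x i) := by
          intro i
          rw [add_sub_cancel_left, abs_of_nonneg (mul_nonneg hr0 (by linarith [hxu i]))]
        simp only [habs]
        rw [← Finset.mul_sum, Finset.sum_sub_distrib, ← hsum, h5, abs_of_nonpos (by linarith)]
        linarith
  · -- move down towards l
    have hls : (∑ i, l i) ≤ s := Finset.sum_le_sum fun i _ => hlx i
    by_cases heq : (∑ i, l i) = s
    · have hTs' : T = s := le_antisymm hTs (heq ▸ hlT)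
      exact ⟨x, hlx, hxu, by rw [← hsum, hTs'], by simp⟩
    · have hlt : (∑ i, l i) < s := lt_of_le_of_ne hls heq
      set r := (s - T) / (s - ∑ i, l i) with hr
      have hr0 : 0 ≤ r := div_nonneg (by linarith) (by linarith)
      have hr1 : r ≤ 1 := by
        rw [hr, div_le_one (by linarith)]; linarith
      have hD : (s - ∑ i, l i) ≠ 0 := by linarith
      have h5 : r * (s - ∑ i, l i) = s - T := by
        rw [hr, div_mul_cancel₀ _ hD]
      refine ⟨fun i => x i - r * (x i - l i), fun i => ?_, fun i => ?_, ?_, ?_⟩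
      · dsimp only; nlinarith [hlx i]
      · dsimp only
        have : 0 ≤ r * (x i - l i) := mul_nonneg hr0 (by linarith [hlx i])
        linarith [hxu i]
      · rw [Finset.sum_sub_distrib, ← Finset.mul_sum, Finset.sum_sub_distrib, ← hsum, h5]
        ring
      · have habs : ∀ i, |x i - r * (x i - l i) - x i| = r * (x i - l i) := by
          intro i
          rw [sub_sub_cancel_left, abs_neg, abs_of_nonneg (mul_nonneg hr0 (by linarith [hlx i]))]
        simp only [habs]
        rw [← Finset.mul_sum, Finset.sum_sub_distrib, ← hsum, h5, abs_of_nonneg (by linarith)]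

lemma lB_le_uB (Qk qik : ℝ) : lB Qk qik ≤ uB Qk qik := by
  unfold lB uB
  rcases lt_trichotomy Qk 0 with h | h | h
  · rw [if_neg (by linarith), if_neg (by linarith)]; exact min_le_left _ _
  · subst h; norm_num
  · rw [if_pos h.le, if_pos h]; exact le_max_left _ _

lemma boxY_eq_Icc {d : ℕ} (Q qi : Fin d → ℝ) :
    boxY Q qi = Set.Icc (fun k => lB (Q k) (qi k)) (fun k => uB (Q k) (qi k)) := by
  ext x
  simp only [boxY, Set.mem_setOf_eq, Set.mem_Icc, Pi.le_def]
  exact ⟨fun h => ⟨fun k => (h k).1, fun k => (h k).2⟩, fun h k => ⟨h.1 k, h.2 k⟩⟩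

lemma shortfall_nonneg {d : ℕ} (Ei : ℝ) (qi pτ xi p : Fin d → ℝ) :
    0 ≤ shortfallM Ei qi pτ xi p := le_max_right _ _

lemma shortfall_diff_le {d : ℕ} (Ei : ℝ) (qi pτ x y p : Fin d → ℝ) :
    shortfallM Ei qi pτ x p - shortfallM Ei qi pτ y p ≤ ∑ k, |x k - y k| * |pτ k - p k| := by
  unfold shortfallM
  have h1 : shortfallM Ei qi pτ x p - shortfallM Ei qi pτ y p
      ≤ |(-(Ei + ∑ k, (qi k - x k) * (pτ k - p k))) - (-(Ei + ∑ k, (qi k - y k) * (pτ k - p k)))| :=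
    (le_abs_self _).trans (abs_max_sub_max_le_abs _ _ _)
  refine le_trans h1 ?_
  have h2 : (-(Ei + ∑ k, (qi k - x k) * (pτ k - p k))) - (-(Ei + ∑ k, (qi k - y k) * (pτ k - p k)))
      = ∑ k, (x k - y k) * (pτ k - p k) := by
    have h3 : (-(Ei + ∑ k, (qi k - x k) * (pτ k - p k))) - (-(Ei + ∑ k, (qi k - y k) * (pτ k - p k)))
        = (∑ k, (qi k - y k) * (pτ k - p k)) - (∑ k, (qi k - x k) * (pτ k - p k)) := by ring
    rw [h3, ← Finset.sum_sub_distrib]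
    exact Finset.sum_congr rfl fun k _ => by ring
  rw [h2]
  refine (Finset.abs_sum_le_sum_abs _ _).trans ?_
  apply Finset.sum_le_sum
  intro k _
  rw [abs_mul]

lemma shortfall_combo {d : ℕ} (Ei : ℝ) (qi pτ x y p : Fin d → ℝ) (a b : ℝ)
    (ha : 0 ≤ a) (hb : 0 ≤ b) (hab : a + b = 1) :
    shortfallM Ei qi pτ (a • x + b • y) p
      ≤ a * shortfallM Ei qi pτ x p + b * shortfallM Ei qi pτ y p := by
  unfold shortfallM
  have hptw : ∀ k, (qi k - (a • x + b • y) k) * (pτ k - p k)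
      = a * ((qi k - x k) * (pτ k - p k)) + b * ((qi k - y k) * (pτ k - p k)) := by
    intro k
    simp only [Pi.add_apply, Pi.smul_apply, smul_eq_mul]
    linear_combination (-(qi k * (pτ k - p k))) * hab
  have hinner : (-(Ei + ∑ k, (qi k - (a • x + b • y) k) * (pτ k - p k)))
      = a * (-(Ei + ∑ k, (qi k - x k) * (pτ k - p k)))
        + b * (-(Ei + ∑ k, (qi k - y k) * (pτ k - p k))) := by
    rw [Finset.sum_congr rfl fun k _ => hptw k, Finset.sum_add_distrib,
      ← Finset.mul_sum, ← Finset.mul_sum]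
    linear_combination Ei * hab
  rw [hinner]
  calc max (a * (-(Ei + ∑ k, (qi k - x k) * (pτ k - p k)))
        + b * (-(Ei + ∑ k, (qi k - y k) * (pτ k - p k)))) 0
      ≤ max (a * (-(Ei + ∑ k, (qi k - x k) * (pτ k - p k)))) 0
        + max (b * (-(Ei + ∑ k, (qi k - y k) * (pτ k - p k)))) 0 :=
        by
          have h0 := max_add_add_le_max_add_max
            (a := a * (-(Ei + ∑ k, (qi k - x k) * (pτ k - p k)))) (c := (0:ℝ))
            (b := b * (-(Ei + ∑ k, (qi k - y k) * (pτ k - p k)))) (d := (0:ℝ))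
          rw [add_zero] at h0
          exact h0
    _ = a * max (-(Ei + ∑ k, (qi k - x k) * (pτ k - p k))) 0
        + b * max (-(Ei + ∑ k, (qi k - y k) * (pτ k - p k))) 0 := by
        rw [mul_max_of_nonneg _ _ ha, mul_max_of_nonneg _ _ hb, mul_zero, mul_zero]
  
lemma shortfall_le_bound {d : ℕ} (Ei : ℝ) (qi pτ x p : Fin d → ℝ) :
    shortfallM Ei qi pτ x p ≤ |Ei| + ∑ k, |qi k - x k| * (|pτ k| + |p k|) := by
  unfold shortfallM
  rw [max_le_iff]
  constructor
  · have h1 : |∑ k, (qi k - x k) * (pτ k - p k)| ≤ ∑ k, |qi k - x k| * (|pτ k| + |p k|) := by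
      refine (Finset.abs_sum_le_sum_abs _ _).trans ?_
      apply Finset.sum_le_sum
      intro k _
      rw [abs_mul]
      exact mul_le_mul_of_nonneg_left (abs_sub _ _) (abs_nonneg _)
    calc -(Ei + ∑ k, (qi k - x k) * (pτ k - p k))
        ≤ |Ei + ∑ k, (qi k - x k) * (pτ k - p k)| := neg_le_abs _
      _ ≤ |Ei| + |∑ k, (qi k - x k) * (pτ k - p k)| := abs_add_le _ _
      _ ≤ |Ei| + ∑ k, |qi k - x k| * (|pτ k| + |p k|) := by linarith
  · positivity

/-- dual decomposition for the expected loss: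
(i) the expected-loss program is convex and admits an optimal allocation;
(ii) an allocation is optimal iff there is a shadow-price vector `λ★` making each
account's reduction a best response and clearing the market;
(iii) any such `λ★` maximizes the dual function `g`. -/
theorem multiasset_dual_decomposition {d n : ℕ} {Ω : Type*} [MeasurableSpace Ω]
    (P : Measure Ω) [IsProbabilityMeasure P]
    (q : Fin n → Fin d → ℝ) (E : Fin n → ℝ) (hEpos : ∀ i, 0 < E i)
    (pτ Q : Fin d → ℝ)
    (hQ : ∀ k, (∑ i, min 0 (q i k)) ≤ Q k ∧ Q k ≤ ∑ i, max 0 (q i k))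
    (pT : Ω → Fin d → ℝ) (hmeas : Measurable pT) (hint : Integrable pT P)
    (f : (Fin n → Fin d → ℝ) → ℝ)
    (hf : ∀ x, f x = ∫ ω, ∑ i, shortfallM (E i) (q i) pτ (x i) (pT ω) ∂P)
    (φ : Fin n → (Fin d → ℝ) → ℝ)
    (hφ : ∀ i xi, φ i xi = ∫ ω, shortfallM (E i) (q i) pτ xi (pT ω) ∂P)
    (g : (Fin d → ℝ) → ℝ)
    (hg : ∀ lam, g lam = -(∑ k, lam k * Q k)
      + ∑ i, sInf ((fun xi => φ i xi + ∑ k, lam k * xi k) '' boxY Q (q i))) :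
    -- (i) convexity and existence of an optimal allocation
    (ConvexOn ℝ (feasX Q q) f
      ∧ ∃ xstar ∈ feasX Q q, ∀ x ∈ feasX Q q, f xstar ≤ f x)
    -- (ii) optimality ⟺ existence of clearing shadow prices with best responses
    ∧ (∀ xstar : Fin n → Fin d → ℝ,
        (xstar ∈ feasX Q q ∧ ∀ x ∈ feasX Q q, f xstar ≤ f x)
        ↔ (∃ lamstar : Fin d → ℝ,
            (∀ i, xstar i ∈ boxY Q (q i)
              ∧ ∀ xi ∈ boxY Q (q i),
                  φ i (xstar i) + ∑ k, lamstar k * xstar i k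
                    ≤ φ i xi + ∑ k, lamstar k * xi k)
            ∧ ∀ k, (∑ i, xstar i k) = Q k))
    -- (iii) any such λ★ maximizes the dual function g
    ∧ (∀ lamstar : Fin d → ℝ, ∀ xstar : Fin n → Fin d → ℝ,
        (∀ i, xstar i ∈ boxY Q (q i)
          ∧ ∀ xi ∈ boxY Q (q i),
              φ i (xstar i) + ∑ k, lamstar k * xstar i k
                ≤ φ i xi + ∑ k, lamstar k * xi k) →
        (∀ k, (∑ i, xstar i k) = Q k) →
        ∀ lam : Fin d → ℝ, g lam ≤ g lamstar) := by
  classical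
  -- ## Basic integrability facts
  have hintk : ∀ k, Integrable (fun ω => pT ω k) P := fun k =>
    (ContinuousLinearMap.proj (R := ℝ) (φ := fun _ : Fin d => ℝ) k).integrable_comp hint
  have hintD : ∀ k, Integrable (fun ω => |pτ k - pT ω k|) P := fun k =>
    ((integrable_const (pτ k)).sub (hintk k)).abs
  set C : Fin d → ℝ := fun k => ∫ ω, |pτ k - pT ω k| ∂P with hC
  have hC0 : ∀ k, 0 ≤ C k := fun k => integral_nonneg fun ω => abs_nonneg _
  have hmeassh : ∀ (i : Fin n) (xi : Fin d → ℝ),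
      Measurable fun ω => shortfallM (E i) (q i) pτ xi (pT ω) := by
    intro i xi
    unfold shortfallM
    refine Measurable.max (Measurable.neg (Measurable.add measurable_const ?_)) measurable_const
    exact Finset.measurable_sum _ fun k _ =>
      (measurable_const.mul (measurable_const.sub ((measurable_pi_apply k).comp hmeas)))
  have hintsh : ∀ (i : Fin n) (xi : Fin d → ℝ),
      Integrable (fun ω => shortfallM (E i) (q i) pτ xi (pT ω)) P := by
    intro i xi
    refine Integrable.mono' (g := fun ω => |E i| + ∑ k, |q i k - xi k| * (|pτ k| + |pT ω k|))
      ?_ (hmeassh i xi).aestronglyMeasurable (Filter.Eventually.of_forall fun ω => ?_)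
    · exact (integrable_const _).add (integrable_finset_sum _ fun k _ =>
        (((integrable_const _).add (hintk k).abs).const_mul _))
    · rw [Real.norm_eq_abs, abs_of_nonneg (shortfall_nonneg _ _ _ _ _)]
      exact shortfall_le_bound _ _ _ _ _
  -- ## f as a sum of the φ i
  have hfeq : ∀ x : Fin n → Fin d → ℝ, f x = ∑ i, φ i (x i) := by
    intro x
    rw [hf, integral_finset_sum _ fun i _ => hintsh i (x i)]
    exact Finset.sum_congr rfl fun i _ => (hφ i (x i)).symm
  -- ## Lipschitz-type estimate for φ
  have hφ_diff : ∀ (i : Fin n) (x y : Fin d → ℝ),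
      φ i x - φ i y ≤ ∑ k, |x k - y k| * C k := by
    intro i x y
    rw [hφ, hφ, ← integral_sub (hintsh i x) (hintsh i y)]
    calc (∫ ω, (shortfallM (E i) (q i) pτ x (pT ω) - shortfallM (E i) (q i) pτ y (pT ω)) ∂P)
        ≤ ∫ ω, ∑ k, |x k - y k| * |pτ k - pT ω k| ∂P := by
          refine integral_mono ((hintsh i x).sub (hintsh i y))
            (integrable_finset_sum _ fun k _ => (hintD k).const_mul _)
            fun ω => shortfall_diff_le _ _ _ _ _ _
      _ = ∑ k, |x k - y k| * C k := by
          rw [integral_finset_sum _ fun k _ => (hintD k).const_mul _]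
          exact Finset.sum_congr rfl fun k _ => integral_const_mul _ _
  -- ## Continuity of φ
  have hφ_cont : ∀ i, Continuous (φ i) := by
    intro i
    have hlip : LipschitzWith (Real.toNNReal (∑ k, C k)) (φ i) := by
      apply LipschitzWith.of_dist_le_mul
      intro x y
      have hb : ∀ z w : Fin d → ℝ, φ i z - φ i w ≤ (∑ k, C k) * dist z w := by
        intro z w
        refine (hφ_diff i z w).trans ?_
        rw [Finset.sum_mul]
        refine Finset.sum_le_sum fun k _ => ?_
        have h1 : |z k - w k| ≤ dist z w := by
          rw [← Real.dist_eq]; exact dist_le_pi_dist z w k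
        rw [mul_comm]
        exact mul_le_mul_of_nonneg_left h1 (hC0 k)
      rw [Real.dist_eq, Real.coe_toNNReal _ (Finset.sum_nonneg fun k _ => hC0 k), abs_sub_le_iff]
      exact ⟨hb x y, by rw [dist_comm]; exact hb y x⟩
    exact hlip.continuous
  -- ## Convexity of φ
  have hφ_conv : ∀ (i : Fin n) (x y : Fin d → ℝ) (a b : ℝ),
      0 ≤ a → 0 ≤ b → a + b = 1 → φ i (a • x + b • y) ≤ a * φ i x + b * φ i y := by
    intro i x y a b ha hb hab
    rw [hφ, hφ, hφ]
    calc (∫ ω, shortfallM (E i) (q i) pτ (a • x + b • y) (pT ω) ∂P)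
        ≤ ∫ ω, (a * shortfallM (E i) (q i) pτ x (pT ω)
            + b * shortfallM (E i) (q i) pτ y (pT ω)) ∂P := by
          refine integral_mono (hintsh i _) (((hintsh i x).const_mul a).add
            ((hintsh i y).const_mul b)) fun ω => shortfall_combo _ _ _ _ _ _ _ _ ha hb hab
      _ = a * (∫ ω, shortfallM (E i) (q i) pτ x (pT ω) ∂P)
          + b * ∫ ω, shortfallM (E i) (q i) pτ y (pT ω) ∂P := by
          rw [integral_add ((hintsh i x).const_mul a) ((hintsh i y).const_mul b),
            integral_const_mul, integral_const_mul]
  -- ## boxes and the compact set K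
  set lo : Fin n → Fin d → ℝ := fun i k => lB (Q k) (q i k) with hlo
  set hi : Fin n → Fin d → ℝ := fun i k => uB (Q k) (q i k) with hhi
  have hlu : ∀ i k, lo i k ≤ hi i k := fun i k => lB_le_uB _ _
  set K : Set (Fin n → Fin d → ℝ) := Set.Icc lo hi with hKdef
  have hKmem : ∀ x, x ∈ K ↔ ∀ i, x i ∈ boxY Q (q i) := by
    intro x
    simp only [hKdef, Set.mem_Icc, Pi.le_def, boxY, Set.mem_setOf_eq]
    constructor
    · exact fun h i k => ⟨h.1 i k, h.2 i k⟩
    · exact fun h => ⟨fun i k => (h i k).1, fun i k => (h i k).2⟩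
  have hKcompact : IsCompact K := isCompact_Icc
  have hKconvex : Convex ℝ K := convex_Icc _ _
  have hsumQ : ∀ k, (∑ i, lo i k) ≤ Q k ∧ Q k ≤ ∑ i, hi i k := by
    intro k
    rcases lt_trichotomy (Q k) 0 with h | h | h
    · have h1 : ∀ i : Fin n, lo i k = min 0 (q i k) := fun i => if_neg (not_le.mpr h)
      have h2 : ∀ i : Fin n, hi i k = 0 := fun i => if_neg (by linarith)
      rw [Finset.sum_congr rfl fun i _ => h1 i, Finset.sum_congr rfl fun i _ => h2 i]
      exact ⟨(hQ k).1, by rw [Finset.sum_const_zero]; linarith⟩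
    · have h1 : ∀ i : Fin n, lo i k = 0 := fun i => if_pos h.ge
      have h2 : ∀ i : Fin n, hi i k = 0 := fun i => if_neg (by linarith)
      rw [Finset.sum_congr rfl fun i _ => h1 i, Finset.sum_congr rfl fun i _ => h2 i,
        Finset.sum_const_zero]
      exact ⟨h.ge, h.le⟩
    · have h1 : ∀ i : Fin n, lo i k = 0 := fun i => if_pos h.le
      have h2 : ∀ i : Fin n, hi i k = max 0 (q i k) := fun i => if_pos h
      rw [Finset.sum_congr rfl fun i _ => h1 i, Finset.sum_congr rfl fun i _ => h2 i,
        Finset.sum_const_zero]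
      exact ⟨h.le, (hQ k).2⟩
  -- ## feasX is nonempty, convex, compact
  have hfeas_iff : ∀ x, x ∈ feasX Q q ↔ (x ∈ K ∧ ∀ k, (∑ i, x i k) = Q k) := by
    intro x
    constructor
    · rintro ⟨h1, h2⟩; exact ⟨(hKmem x).mpr h2, h1⟩
    · rintro ⟨h1, h2⟩; exact ⟨h2, (hKmem x).mp h1⟩
  have hfeas_ne : (feasX Q q).Nonempty := by
    set t : Fin d → ℝ := fun k =>
      if h : (∑ i, hi i k) = ∑ i, lo i k then 0
      else (Q k - ∑ i, lo i k) / ((∑ i, hi i k) - ∑ i, lo i k) with ht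
    have hls : ∀ k, (∑ i, lo i k) ≤ ∑ i, hi i k := fun k =>
      Finset.sum_le_sum fun i _ => hlu i k
    have ht01 : ∀ k, 0 ≤ t k ∧ t k ≤ 1 := by
      intro k
      rw [ht]
      dsimp only
      split_ifs with h
      · norm_num
      · have hlt : (∑ i, lo i k) < ∑ i, hi i k := lt_of_le_of_ne (hls k) (Ne.symm h)
        constructor
        · exact div_nonneg (by linarith [(hsumQ k).1]) (by linarith)
        · rw [div_le_one (by linarith)]; linarith [(hsumQ k).2]
    refine ⟨fun i k => lo i k + t k * (hi i k - lo i k), ?_, ?_⟩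
    · intro k
      rw [Finset.sum_add_distrib, ← Finset.mul_sum, Finset.sum_sub_distrib]
      rw [ht]
      dsimp only
      split_ifs with h
      · have := (hsumQ k).1
        have := (hsumQ k).2
        rw [h] at *
        linarith
      · rw [div_mul_cancel₀ _ (by
          intro hc
          exact h (by linarith [sub_eq_zero.mp hc]))]
        ring
    · intro i k
      dsimp only
      rw [show lB (Q k) (q i k) = lo i k from rfl, show uB (Q k) (q i k) = hi i k from rfl]
      constructor
      · have : 0 ≤ t k * (hi i k - lo i k) := mul_nonneg (ht01 k).1 (by linarith [hlu i k])
        linarith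
      · nlinarith [hlu i k, (ht01 k).1, (ht01 k).2]
  have hfeas_sub : feasX Q q ⊆ K := fun x hx => ((hfeas_iff x).mp hx).1
  have hfeas_closed : IsClosed (feasX Q q) := by
    have heq : feasX Q q = K ∩ {x | ∀ k, (∑ i, x i k) = Q k} := by
      ext x; rw [hfeas_iff]; simp [Set.mem_inter_iff, Set.mem_setOf_eq]
    rw [heq]
    refine isClosed_Icc.inter ?_
    have heq2 : {x : Fin n → Fin d → ℝ | ∀ k, (∑ i, x i k) = Q k}
        = ⋂ k, {x | (∑ i, x i k) = Q k} := by ext x; simp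
    rw [heq2]
    exact isClosed_iInter fun k => isClosed_eq
      (continuous_finset_sum _ fun i _ => (continuous_apply k).comp (continuous_apply i))
      continuous_const
  have hfeas_compact : IsCompact (feasX Q q) :=
    hKcompact.of_isClosed_subset hfeas_closed hfeas_sub
  have hXconvex : Convex ℝ (feasX Q q) := by
    intro x hx y hy a b ha hb hab
    rw [hfeas_iff] at hx hy ⊢
    refine ⟨hKconvex hx.1 hy.1 ha hb hab, fun k => ?_⟩
    have hsum : ∑ i, (a • x + b • y) i k = a * (∑ i, x i k) + b * (∑ i, y i k) := by
      rw [Finset.mul_sum, Finset.mul_sum, ← Finset.sum_add_distrib]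
      rfl
    rw [hsum, hx.2 k, hy.2 k]
    linear_combination (Q k) * hab
  -- ## continuity and convexity of f
  have hfcont : Continuous f := by
    have : f = fun x => ∑ i, φ i (x i) := funext hfeq
    rw [this]
    exact continuous_finset_sum _ fun i _ => (hφ_cont i).comp (continuous_apply i)
  have hfconv : ∀ (x y : Fin n → Fin d → ℝ) (a b : ℝ),
      0 ≤ a → 0 ≤ b → a + b = 1 → f (a • x + b • y) ≤ a * f x + b * f y := by
    intro x y a b ha hb hab
    rw [hfeq, hfeq, hfeq]
    calc ∑ i, φ i ((a • x + b • y) i) = ∑ i, φ i (a • x i + b • y i) := rfl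
      _ ≤ ∑ i, (a * φ i (x i) + b * φ i (y i)) :=
          Finset.sum_le_sum fun i _ => hφ_conv i (x i) (y i) a b ha hb hab
      _ = a * (∑ i, φ i (x i)) + b * ∑ i, φ i (y i) := by
          rw [Finset.sum_add_distrib, ← Finset.mul_sum, ← Finset.mul_sum]
  have hconvOnX : ConvexOn ℝ (feasX Q q) f := by
    refine ⟨hXconvex, fun x _ y _ a b ha hb hab => ?_⟩
    simpa [smul_eq_mul] using hfconv x y a b ha hb hab
  have hexistence : ∃ xs ∈ feasX Q q, ∀ x ∈ feasX Q q, f xs ≤ f x := by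
    obtain ⟨xs, hxs, hmin⟩ := hfeas_compact.exists_isMinOn hfeas_ne hfcont.continuousOn
    exact ⟨xs, hxs, fun x hx => hmin hx⟩
  -- ## part (ii), forward direction
  have hforward : ∀ xstar : Fin n → Fin d → ℝ,
      (xstar ∈ feasX Q q ∧ ∀ x ∈ feasX Q q, f xstar ≤ f x) →
      (∃ lamstar : Fin d → ℝ,
        (∀ i, xstar i ∈ boxY Q (q i)
          ∧ ∀ xi ∈ boxY Q (q i),
              φ i (xstar i) + ∑ k, lamstar k * xstar i k
                ≤ φ i xi + ∑ k, lamstar k * xi k)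
        ∧ ∀ k, (∑ i, xstar i k) = Q k) := by
    rintro xstar ⟨hxmem, hxopt⟩
    set G : (Fin d → ℝ) → (Fin n → Fin d → ℝ) → ℝ :=
      fun b x => f x + ∑ k, C k * |b k - ∑ i, x i k| with hG
    have hGcont : ∀ b, Continuous (G b) := by
      intro b
      refine hfcont.add (continuous_finset_sum _ fun k _ => (continuous_const.mul ?_))
      exact (continuous_const.sub (continuous_finset_sum _ fun i _ =>
        (continuous_apply k).comp (continuous_apply i))).abs
    have hKne : K.Nonempty := hfeas_ne.mono hfeas_sub
    have hminG : ∀ b, ∃ xb ∈ K, ∀ y ∈ K, G b xb ≤ G b y := by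
      intro b
      obtain ⟨xb, h1, h2⟩ := hKcompact.exists_isMinOn hKne (hGcont b).continuousOn
      exact ⟨xb, h1, fun y hy => h2 hy⟩
    choose xm hxmK hxmmin using hminG
    set v : (Fin d → ℝ) → ℝ := fun b => G b (xm b) with hv
    have hvle : ∀ b x, x ∈ K → v b ≤ G b x := fun b x hx => hxmmin b x hx
    -- transport estimate : v Q = f xstar
    have htrans : ∀ x ∈ K, f xstar ≤ G Q x := by
      intro x hx
      have hxbox : ∀ i, x i ∈ boxY Q (q i) := (hKmem x).mp hx
      have hbk : ∀ k, ∃ y : Fin n → ℝ, (∀ i, lo i k ≤ y i) ∧ (∀ i, y i ≤ hi i k)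
          ∧ (∑ i, y i) = Q k ∧ (∑ i, |y i - x i k|) ≤ |(∑ i, x i k) - Q k| := by
        intro k
        exact transport_aux (fun i => lo i k) (fun i => hi i k) (fun i => x i k)
          (fun i => (hxbox i k).1) (fun i => (hxbox i k).2) (Q k) (hsumQ k).1 (hsumQ k).2
      choose Y h1 h2 h3 h4 using hbk
      set x' : Fin n → Fin d → ℝ := fun i k => Y k i with hx'
      have hx'feas : x' ∈ feasX Q q := ⟨fun k => h3 k, fun i k => ⟨h1 k i, h2 k i⟩⟩
      have h5 : f xstar ≤ f x' := hxopt x' hx'feas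
      have hdiff : f x' - f x ≤ ∑ i, ∑ k, |x' i k - x i k| * C k := by
        rw [hfeq, hfeq, ← Finset.sum_sub_distrib]
        exact Finset.sum_le_sum fun i _ => hφ_diff i (x' i) (x i)
      have hswap : ∑ i, ∑ k, |x' i k - x i k| * C k
          = ∑ k, C k * (∑ i, |Y k i - x i k|) := by
        rw [Finset.sum_comm]
        refine Finset.sum_congr rfl fun k _ => ?_
        rw [Finset.mul_sum]
        exact Finset.sum_congr rfl fun i _ => mul_comm _ _
      have hbound : ∑ k, C k * (∑ i, |Y k i - x i k|) ≤ ∑ k, C k * |Q k - ∑ i, x i k| := by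
        refine Finset.sum_le_sum fun k _ => ?_
        refine mul_le_mul_of_nonneg_left ?_ (hC0 k)
        rw [abs_sub_comm]
        exact h4 k
      have : G Q x = f x + ∑ k, C k * |Q k - ∑ i, x i k| := rfl
      rw [this]
      rw [hswap] at hdiff
      linarith
    have hxstarK : xstar ∈ K := hfeas_sub hxmem
    have hvQ : v Q = f xstar := by
      apply le_antisymm
      · have hGQ : G Q xstar = f xstar := by
          have hz : ∀ k, Q k - ∑ i, xstar i k = 0 := fun k => by rw [hxmem.1 k]; ring
          rw [hG]
          dsimp only
          rw [Finset.sum_congr rfl fun k _ => by rw [hz k, abs_zero, mul_zero],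
            Finset.sum_const_zero, add_zero]
        exact (hvle Q xstar hxstarK).trans_eq hGQ
      · exact htrans (xm Q) (hxmK Q)
    -- convexity of the value function v
    have hvconv : ConvexOn ℝ Set.univ v := by
      refine ⟨convex_univ, fun b1 _ b2 _ a b ha hb hab => ?_⟩
      have hcomb : a • xm b1 + b • xm b2 ∈ K := hKconvex (hxmK b1) (hxmK b2) ha hb hab
      have hstep : G (a • b1 + b • b2) (a • xm b1 + b • xm b2)
          ≤ a * G b1 (xm b1) + b * G b2 (xm b2) := by
        have hfpart := hfconv (xm b1) (xm b2) a b ha hb hab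
        have habs : ∀ k, C k * |(a • b1 + b • b2) k - ∑ i, (a • xm b1 + b • xm b2) i k|
            ≤ a * (C k * |b1 k - ∑ i, xm b1 i k|) + b * (C k * |b2 k - ∑ i, xm b2 i k|) := by
          intro k
          have hsum : ∑ i, (a • xm b1 + b • xm b2) i k
              = a * (∑ i, xm b1 i k) + b * (∑ i, xm b2 i k) := by
            rw [Finset.mul_sum, Finset.mul_sum, ← Finset.sum_add_distrib]
            rfl
          have hdec : (a • b1 + b • b2) k - (a * (∑ i, xm b1 i k) + b * (∑ i, xm b2 i k))
              = a * (b1 k - ∑ i, xm b1 i k) + b * (b2 k - ∑ i, xm b2 i k) := by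
            simp only [Pi.add_apply, Pi.smul_apply, smul_eq_mul]
            ring
          rw [hsum, hdec]
          calc C k * |a * (b1 k - ∑ i, xm b1 i k) + b * (b2 k - ∑ i, xm b2 i k)|
              ≤ C k * (a * |b1 k - ∑ i, xm b1 i k| + b * |b2 k - ∑ i, xm b2 i k|) := by
                refine mul_le_mul_of_nonneg_left ((abs_add_le _ _).trans ?_) (hC0 k)
                rw [abs_mul, abs_mul, abs_of_nonneg ha, abs_of_nonneg hb]
            _ = a * (C k * |b1 k - ∑ i, xm b1 i k|) + b * (C k * |b2 k - ∑ i, xm b2 i k|) := by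
                ring
        have hsum_le := Finset.sum_le_sum fun k (_ : k ∈ Finset.univ) => habs k
        rw [Finset.sum_add_distrib, ← Finset.mul_sum, ← Finset.mul_sum] at hsum_le
        rw [hG]
        dsimp only
        linarith
      calc v (a • b1 + b • b2) ≤ G (a • b1 + b • b2) (a • xm b1 + b • xm b2) :=
            hvle _ _ hcomb
        _ ≤ a * G b1 (xm b1) + b * G b2 (xm b2) := hstep
        _ = a • v b1 + b • v b2 := by rw [hv]; simp [smul_eq_mul]
    -- continuity of v
    have hvlip : ∀ b b', v b ≤ v b' + ∑ k, C k * |b k - b' k| := by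
      intro b b'
      have h1 : v b ≤ G b (xm b') := hvle b (xm b') (hxmK b')
      have h2 : G b (xm b') ≤ G b' (xm b') + ∑ k, C k * |b k - b' k| := by
        rw [hG]
        dsimp only
        rw [add_assoc, ← Finset.sum_add_distrib]
        refine add_le_add le_rfl (Finset.sum_le_sum fun k _ => ?_)
        rw [← mul_add]
        refine mul_le_mul_of_nonneg_left ?_ (hC0 k)
        calc |b k - ∑ i, xm b' i k| ≤ |b' k - ∑ i, xm b' i k| + |b k - b' k| := by
              have := abs_add_le (b' k - ∑ i, xm b' i k) (b k - b' k)
              simpa [sub_add_sub_cancel'] using (by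
                have h3 : b k - ∑ i, xm b' i k = (b' k - ∑ i, xm b' i k) + (b k - b' k) := by ring
                rw [h3]; exact abs_add_le _ _)
          _ ≤ _ := le_rfl
      exact h1.trans h2
    have hvcont : Continuous v := by
      have hlip : LipschitzWith (Real.toNNReal (∑ k, C k)) v := by
        apply LipschitzWith.of_dist_le_mul
        intro x y
        have hb2 : ∀ z w : Fin d → ℝ, v z - v w ≤ (∑ k, C k) * dist z w := by
          intro z w
          have := hvlip z w
          have hsum2 : ∑ k, C k * |z k - w k| ≤ (∑ k, C k) * dist z w := by
            rw [Finset.sum_mul]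
            refine Finset.sum_le_sum fun k _ => ?_
            have h1 : |z k - w k| ≤ dist z w := by
              rw [← Real.dist_eq]; exact dist_le_pi_dist z w k
            exact mul_le_mul_of_nonneg_left h1 (hC0 k)
          linarith
        rw [Real.dist_eq, Real.coe_toNNReal _ (Finset.sum_nonneg fun k _ => hC0 k),
          abs_sub_le_iff]
        exact ⟨hb2 x y, by rw [dist_comm]; exact hb2 y x⟩
      exact hlip.continuous
    obtain ⟨lam0, hlam0⟩ := exists_subgradient_aux v hvconv hvcont Q
    -- global inequality on K
    have hglob : ∀ x ∈ K, f xstar + ∑ k, lam0 k * ((∑ i, x i k) - Q k) ≤ f x := by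
      intro x hx
      have h1 := hlam0 (fun k => ∑ i, x i k)
      have h2 : v (fun k => ∑ i, x i k) ≤ f x := by
        have : G (fun k => ∑ i, x i k) x = f x := by
          rw [hG]
          dsimp only
          rw [Finset.sum_congr rfl fun k (_ : k ∈ Finset.univ) => by
            rw [sub_self, abs_zero, mul_zero], Finset.sum_const_zero, add_zero]
        exact (hvle _ x hx).trans_eq this
      rw [hvQ] at h1
      calc f xstar + ∑ k, lam0 k * ((∑ i, x i k) - Q k) ≤ v (fun k => ∑ i, x i k) := h1
        _ ≤ f x := h2
    refine ⟨fun k => -lam0 k, fun i => ⟨(hKmem xstar).mp hxstarK i, ?_⟩, hxmem.1⟩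
    intro xi hxi
    have hupK : Function.update xstar i xi ∈ K := by
      rw [hKmem]
      intro j
      rcases eq_or_ne j i with rfl | hne
      · rw [Function.update_self]; exact hxi
      · rw [Function.update_of_ne hne]; exact (hKmem xstar).mp hxstarK j
    have hglobu := hglob _ hupK
    have hfu : f (Function.update xstar i xi)
        = φ i xi + ∑ j ∈ Finset.univ.erase i, φ j (xstar j) := by
      rw [hfeq]
      rw [show (∑ j, φ j (Function.update xstar i xi j))
          = ∑ j, Function.update (fun j => φ j (xstar j)) i (φ i xi) j from
        Finset.sum_congr rfl fun j _ => by
          rcases eq_or_ne j i with rfl | hne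
          · rw [Function.update_self, Function.update_self]
          · rw [Function.update_of_ne hne, Function.update_of_ne hne]]
      rw [Finset.sum_update_of_mem (Finset.mem_univ i)]
      congr 1
      exact Finset.sum_congr (by rw [Finset.sdiff_singleton_eq_erase]) fun j _ => rfl
    have hfx : f xstar = φ i (xstar i) + ∑ j ∈ Finset.univ.erase i, φ j (xstar j) := by
      rw [hfeq]
      exact (Finset.add_sum_erase _ _ (Finset.mem_univ i)).symm
    have hAu : ∀ k, (∑ j, Function.update xstar i xi j k)
        = xi k + ∑ j ∈ Finset.univ.erase i, xstar j k := by
      intro k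
      rw [show (∑ j, Function.update xstar i xi j k)
          = ∑ j, Function.update (fun j => xstar j k) i (xi k) j from
        Finset.sum_congr rfl fun j _ => by
          rcases eq_or_ne j i with rfl | hne
          · rw [Function.update_self, Function.update_self]
          · rw [Function.update_of_ne hne, Function.update_of_ne hne]]
      rw [Finset.sum_update_of_mem (Finset.mem_univ i)]
      congr 1
      exact Finset.sum_congr (by rw [Finset.sdiff_singleton_eq_erase]) fun j _ => rfl
    have hAx : ∀ k, Q k = xstar i k + ∑ j ∈ Finset.univ.erase i, xstar j k := by
      intro k
      rw [← hxmem.1 k]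
      exact (Finset.add_sum_erase _ _ (Finset.mem_univ i)).symm
    rw [hfu, hfx] at hglobu
    have hlam_sum : ∑ k, lam0 k * ((∑ j, Function.update xstar i xi j k) - Q k)
        = (∑ k, lam0 k * xi k) - ∑ k, lam0 k * xstar i k := by
      rw [← Finset.sum_sub_distrib]
      refine Finset.sum_congr rfl fun k _ => ?_
      rw [hAu k, hAx k]
      ring
    rw [hlam_sum] at hglobu
    have hneg1 : ∑ k, (fun k => -lam0 k) k * xstar i k = -∑ k, lam0 k * xstar i k := by
      rw [← Finset.sum_neg_distrib]
      exact Finset.sum_congr rfl fun k _ => by ring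
    have hneg2 : ∑ k, (fun k => -lam0 k) k * xi k = -∑ k, lam0 k * xi k := by
      rw [← Finset.sum_neg_distrib]
      exact Finset.sum_congr rfl fun k _ => by ring
    rw [hneg1, hneg2]
    linarith
  -- ## part (ii), backward direction
  have hbackward : ∀ xstar : Fin n → Fin d → ℝ,
      (∃ lamstar : Fin d → ℝ,
        (∀ i, xstar i ∈ boxY Q (q i)
          ∧ ∀ xi ∈ boxY Q (q i),
              φ i (xstar i) + ∑ k, lamstar k * xstar i k
                ≤ φ i xi + ∑ k, lamstar k * xi k)
        ∧ ∀ k, (∑ i, xstar i k) = Q k) →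
      (xstar ∈ feasX Q q ∧ ∀ x ∈ feasX Q q, f xstar ≤ f x) := by
    rintro xstar ⟨lamstar, hbest, hclear⟩
    have hxmem : xstar ∈ feasX Q q := ⟨hclear, fun i => (hbest i).1⟩
    refine ⟨hxmem, fun x hx => ?_⟩
    rw [hfeq, hfeq]
    have hper : ∀ i, φ i (xstar i) + ∑ k, lamstar k * xstar i k
        ≤ φ i (x i) + ∑ k, lamstar k * x i k := fun i => (hbest i).2 (x i) (hx.2 i)
    have hsum := Finset.sum_le_sum fun i (_ : i ∈ Finset.univ) => hper i
    rw [Finset.sum_add_distrib, Finset.sum_add_distrib] at hsum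
    have hcross : ∀ (z : Fin n → Fin d → ℝ), (∀ k, (∑ i, z i k) = Q k) →
        (∑ i, ∑ k, lamstar k * z i k) = ∑ k, lamstar k * Q k := by
      intro z hz
      rw [Finset.sum_comm]
      refine Finset.sum_congr rfl fun k _ => ?_
      rw [← Finset.mul_sum, hz k]
    rw [hcross xstar hclear, hcross x hx.1] at hsum
    linarith
  -- ## part (iii)
  have hpart3 : ∀ lamstar : Fin d → ℝ, ∀ xstar : Fin n → Fin d → ℝ,
      (∀ i, xstar i ∈ boxY Q (q i)
        ∧ ∀ xi ∈ boxY Q (q i),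
            φ i (xstar i) + ∑ k, lamstar k * xstar i k
              ≤ φ i xi + ∑ k, lamstar k * xi k) →
      (∀ k, (∑ i, xstar i k) = Q k) →
      ∀ lam : Fin d → ℝ, g lam ≤ g lamstar := by
    intro lamstar xstar hbest hclear lam
    have hboxne : ∀ i : Fin n, (boxY Q (q i)).Nonempty := by
      intro i
      exact ⟨fun k => lB (Q k) (q i k), fun k => ⟨le_rfl, lB_le_uB _ _⟩⟩
    have hboxcompact : ∀ i : Fin n, IsCompact (boxY Q (q i)) := by
      intro i
      rw [boxY_eq_Icc]
      exact isCompact_Icc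
    have hInf_star : ∀ i, sInf ((fun xi => φ i xi + ∑ k, lamstar k * xi k) '' boxY Q (q i))
        = φ i (xstar i) + ∑ k, lamstar k * xstar i k := by
      intro i
      apply le_antisymm
      · refine csInf_le ⟨φ i (xstar i) + ∑ k, lamstar k * xstar i k, ?_⟩
          ⟨xstar i, (hbest i).1, rfl⟩
        rintro r ⟨xi, hxi, rfl⟩
        exact (hbest i).2 xi hxi
      · refine le_csInf ((hboxne i).image _) ?_
        rintro r ⟨xi, hxi, rfl⟩
        exact (hbest i).2 xi hxi
    have hInf_le : ∀ i, sInf ((fun xi => φ i xi + ∑ k, lam k * xi k) '' boxY Q (q i))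
        ≤ φ i (xstar i) + ∑ k, lam k * xstar i k := by
      intro i
      refine csInf_le ?_ ⟨xstar i, (hbest i).1, rfl⟩
      refine IsCompact.bddBelow_image (hboxcompact i) ?_
      exact ((hφ_cont i).add (continuous_finset_sum _ fun k _ =>
        continuous_const.mul (continuous_apply k))).continuousOn
    have hcross : ∀ mu : Fin d → ℝ, (∑ i, ∑ k, mu k * xstar i k) = ∑ k, mu k * Q k := by
      intro mu
      rw [Finset.sum_comm]
      refine Finset.sum_congr rfl fun k _ => ?_
      rw [← Finset.mul_sum, hclear k]
    rw [hg, hg]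
    have h1 : ∑ i, sInf ((fun xi => φ i xi + ∑ k, lamstar k * xi k) '' boxY Q (q i))
        = (∑ i, φ i (xstar i)) + ∑ k, lamstar k * Q k := by
      rw [Finset.sum_congr rfl fun i _ => hInf_star i, Finset.sum_add_distrib, hcross lamstar]
    have h2 : ∑ i, sInf ((fun xi => φ i xi + ∑ k, lam k * xi k) '' boxY Q (q i))
        ≤ (∑ i, φ i (xstar i)) + ∑ k, lam k * Q k := by
      calc ∑ i, sInf ((fun xi => φ i xi + ∑ k, lam k * xi k) '' boxY Q (q i))
          ≤ ∑ i, (φ i (xstar i) + ∑ k, lam k * xstar i k) :=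
            Finset.sum_le_sum fun i _ => hInf_le i
        _ = (∑ i, φ i (xstar i)) + ∑ k, lam k * Q k := by
            rw [Finset.sum_add_distrib, hcross lam]
    rw [h1]
    linarith
  exact ⟨⟨hconvOnX, hexistence⟩,
    fun xstar => ⟨hforward xstar, hbackward xstar⟩, hpart3⟩
end

section
/- In the single-factor multi-asset setting, suppose only asset k₀ is subject to ADL, i.e. Q^k = 0 for all k ≠ k₀, and v^{k₀} ≠ 0. Let η★ be any solution of the budget equation ∑_{i=1}^n E_i ℓ_i★(η★) = v·(∑_{i=1}^n q_i − Q), with water-filling targets ℓ_i★(η) defined as the unique minimizer of z ↦ ψ(z) − η z over [ℓ̲_i, ℓ̄_i]. Define x★ by x★_i^k := 0 for k ≠ k₀ and x★_i^{k₀} := q_i^{k₀} − (E_i ℓ_i★(η★) − ∑_{k ≠ k₀} v^k q_i^k)/v^{k₀}. Then x★ ∈ X, ℓ_i^(v)(x★_i) = ℓ_i★(η★) for all i, and x★ minimizes x ↦ E[L(x, p_T)] over X. -/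
open MeasureTheory

/-- Factor leverage `ℓ_i^(v)(x_i) = v·(q_i − x_i)/E_i`. -/
noncomputable def factorLev {d : ℕ} (v qi : Fin d → ℝ) (Ei : ℝ) (xi : Fin d → ℝ) : ℝ :=
  (∑ k, v k * (qi k - xi k)) / Ei

/-- factor water-filling for single-asset ADL: when only asset `k₀` is
subject to ADL and `v^{k₀} ≠ 0`, the explicit allocation realizing the clipped
water-filling targets is feasible, attains the targets, and minimizes the expected loss. -/
theorem factor_waterfilling_single_asset {d n : ℕ} {Ω : Type*} [MeasurableSpace Ω]
    (P : Measure Ω) [IsProbabilityMeasure P]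
    (q : Fin n → Fin d → ℝ) (E : Fin n → ℝ) (hEpos : ∀ i, 0 < E i)
    (pτ Q : Fin d → ℝ)
    (hQ : ∀ k, (∑ i, min 0 (q i k)) ≤ Q k ∧ Q k ≤ ∑ i, max 0 (q i k))
    (hne : (feasX Q q).Nonempty)
    (v : Fin d → ℝ)
    (ε : Ω → ℝ) (hmeas : Measurable ε) (hint : Integrable ε P)
    (φ : ℝ → ℝ)
    (hdens : Measure.map ε P = volume.withDensity fun x => ENNReal.ofReal (φ x))
    (hφpos : ∀ x, 0 < φ x)
    (pT : Ω → Fin d → ℝ) (hpT : ∀ ω k, pT ω k = pτ k + ε ω * v k)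
    (ψ : ℝ → ℝ) (hψ : ∀ z, ψ z = ∫ ω, max (ε ω * z - 1) 0 ∂P)
    (lo hi : Fin n → ℝ)
    (hInterval : ∀ i, factorLev v (q i) (E i) '' boxY Q (q i) = Set.Icc (lo i) (hi i))
    -- only asset k₀ is subject to ADL
    (k₀ : Fin d) (hQ0 : ∀ k, k ≠ k₀ → Q k = 0) (hv : v k₀ ≠ 0)
    -- the water-filling targets at a solution η★ of the budget equation
    (ηstar : ℝ) (ℓt : Fin n → ℝ)
    (hℓt : ∀ i, ℓt i ∈ Set.Icc (lo i) (hi i)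
      ∧ ∀ z ∈ Set.Icc (lo i) (hi i), ψ (ℓt i) - ηstar * ℓt i ≤ ψ z - ηstar * z)
    (hbudget : (∑ i, E i * ℓt i) = ∑ k, v k * ((∑ i, q i k) - Q k))
    -- the explicit allocation
    (xstar : Fin n → Fin d → ℝ)
    (hxstar : ∀ i k, xstar i k =
      if k = k₀ then
        q i k₀ - (E i * ℓt i - ∑ k' ∈ Finset.univ.erase k₀, v k' * q i k') / v k₀
      else 0) :
    xstar ∈ feasX Q q
    ∧ (∀ i, factorLev v (q i) (E i) (xstar i) = ℓt i)
    ∧ (∀ x ∈ feasX Q q,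
        (∫ ω, ∑ i, shortfallM (E i) (q i) pτ (xstar i) (pT ω) ∂P)
          ≤ ∫ ω, ∑ i, shortfallM (E i) (q i) pτ (x i) (pT ω) ∂P) := by
  classical
  have hE0 : ∀ i, E i ≠ 0 := fun i => (hEpos i).ne'
  -- coordinates off k₀ in the box are zero
  have hbox0 : ∀ i, ∀ xi ∈ boxY Q (q i), ∀ k, k ≠ k₀ → xi k = 0 := by
    intro i xi hxi k hk
    have h := hxi k
    rw [hQ0 k hk] at h
    simp only [lB, uB, le_refl, if_pos, lt_irrefl, if_neg, not_lt] at h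
    have h1 : (0:ℝ) ≤ xi k := by simpa using h.1
    have h2 : xi k ≤ 0 := by simpa using h.2
    linarith
  have hEℓ : ∀ i (xi : Fin d → ℝ),
      E i * factorLev v (q i) (E i) xi = ∑ k, v k * (q i k - xi k) := by
    intro i xi
    unfold factorLev
    rw [mul_comm, div_mul_cancel₀ _ (hE0 i)]
  have hsplit : ∀ i (xi : Fin d → ℝ), (∀ k, k ≠ k₀ → xi k = 0) →
      (∑ k, v k * (q i k - xi k))
        = v k₀ * (q i k₀ - xi k₀) + ∑ k' ∈ Finset.univ.erase k₀, v k' * q i k' := by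
    intro i xi hz
    rw [← Finset.add_sum_erase _ (fun k => v k * (q i k - xi k)) (Finset.mem_univ k₀)]
    congr 1
    refine Finset.sum_congr rfl fun k hk => ?_
    rw [hz k (Finset.ne_of_mem_erase hk)]
    ring
  -- the key per-account fact: xstar is the unique box point with the target leverage
  have hkey : ∀ i, xstar i ∈ boxY Q (q i) ∧ factorLev v (q i) (E i) (xstar i) = ℓt i := by
    intro i
    have h1 := (hℓt i).1
    rw [← hInterval i] at h1
    obtain ⟨yi, hyi, hfy⟩ := h1
    have hy0 : ∀ k, k ≠ k₀ → yi k = 0 := fun k hk => hbox0 i yi hyi k hk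
    have hfy' : v k₀ * (q i k₀ - yi k₀) + ∑ k' ∈ Finset.univ.erase k₀, v k' * q i k'
        = E i * ℓt i := by
      rw [← hsplit i yi hy0, ← hEℓ i yi, hfy]
    have heq : xstar i = yi := by
      funext k
      by_cases hk : k = k₀
      · rw [hk, hxstar i k₀, if_pos rfl]
        have h2 : E i * ℓt i - (∑ k' ∈ Finset.univ.erase k₀, v k' * q i k')
            = v k₀ * (q i k₀ - yi k₀) := by linarith [hfy']
        rw [h2, mul_div_cancel_left₀ _ hv]
        ring
      · rw [hxstar i k, if_neg hk, hy0 k hk]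
    rw [heq]
    exact ⟨hyi, hfy⟩
  -- budget rewritten isolating k₀
  have hbudget' : (∑ i, E i * ℓt i)
      = v k₀ * ((∑ i, q i k₀) - Q k₀) + ∑ k' ∈ Finset.univ.erase k₀, v k' * ∑ i, q i k' := by
    rw [hbudget, ← Finset.add_sum_erase _ (fun k => v k * ((∑ i, q i k) - Q k))
      (Finset.mem_univ k₀)]
    congr 1
    refine Finset.sum_congr rfl fun k hk => ?_
    rw [hQ0 k (Finset.ne_of_mem_erase hk)]
    ring
  have hSsum : (∑ i, ∑ k' ∈ Finset.univ.erase k₀, v k' * q i k')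
      = ∑ k' ∈ Finset.univ.erase k₀, v k' * ∑ i, q i k' := by
    rw [Finset.sum_comm]
    exact Finset.sum_congr rfl fun k _ => (Finset.mul_sum _ _ _).symm
  -- sum constraint
  have hsumc : ∀ k, (∑ i, xstar i k) = Q k := by
    intro k
    by_cases hk : k = k₀
    · rw [hk]
      apply mul_left_cancel₀ hv
      rw [Finset.mul_sum]
      have hterm : ∀ i, v k₀ * xstar i k₀
          = v k₀ * q i k₀ - (E i * ℓt i - ∑ k' ∈ Finset.univ.erase k₀, v k' * q i k') := by
        intro i
        rw [hxstar i k₀, if_pos rfl, mul_sub]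
        congr 1
        rw [mul_comm, div_mul_cancel₀ _ hv]
      rw [Finset.sum_congr rfl fun i _ => hterm i, Finset.sum_sub_distrib,
        Finset.sum_sub_distrib, hSsum, ← Finset.mul_sum]
      linarith [hbudget']
    · rw [hQ0 k hk]
      exact Finset.sum_eq_zero fun i _ => by rw [hxstar i k, if_neg hk]
  -- pointwise identity for the shortfall
  have key : ∀ (i : Fin n) (xi : Fin d → ℝ) (ω : Ω),
      shortfallM (E i) (q i) pτ xi (pT ω)
        = E i * max (ε ω * factorLev v (q i) (E i) xi - 1) 0 := by
    intro i xi ω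
    unfold shortfallM
    have h1 : (∑ k, (q i k - xi k) * (pτ k - pT ω k))
        = -(ε ω) * ∑ k, v k * (q i k - xi k) := by
      rw [Finset.mul_sum]
      refine Finset.sum_congr rfl fun k _ => ?_
      rw [hpT ω k]
      ring
    rw [h1, ← hEℓ i xi]
    rw [show -(E i + -(ε ω) * (E i * factorLev v (q i) (E i) xi))
        = E i * (ε ω * factorLev v (q i) (E i) xi - 1) by ring]
    rw [mul_max_of_nonneg _ _ (hEpos i).le, mul_zero]
  have hψint : ∀ z : ℝ, Integrable (fun ω => max (ε ω * z - 1) 0) P :=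
    fun z => ((hint.mul_const z).sub (integrable_const 1)).pos_part
  -- the objective in terms of ψ
  have hobj : ∀ x : Fin n → Fin d → ℝ,
      (∫ ω, ∑ i, shortfallM (E i) (q i) pτ (x i) (pT ω) ∂P)
        = ∑ i, E i * ψ (factorLev v (q i) (E i) (x i)) := by
    intro x
    have hfi : ∀ i : Fin n, (fun ω => shortfallM (E i) (q i) pτ (x i) (pT ω))
        = fun ω => E i * max (ε ω * factorLev v (q i) (E i) (x i) - 1) 0 :=
      fun i => funext fun ω => key i (x i) ω
    have hib : ∀ i ∈ Finset.univ, Integrable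
        (fun ω => shortfallM (E i) (q i) pτ (x i) (pT ω)) P := by
      intro i _
      rw [hfi i]
      exact (hψint _).const_mul _
    rw [integral_finset_sum _ hib]
    refine Finset.sum_congr rfl fun i _ => ?_
    rw [hfi i, integral_const_mul, hψ]
  refine ⟨⟨hsumc, fun i => (hkey i).1⟩, fun i => (hkey i).2, ?_⟩
  intro x hx
  rw [hobj x, hobj xstar,
    Finset.sum_congr rfl fun i (_ : i ∈ Finset.univ) => by rw [(hkey i).2]]
  have hmem : ∀ i, factorLev v (q i) (E i) (x i) ∈ Set.Icc (lo i) (hi i) := by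
    intro i
    rw [← hInterval i]
    exact Set.mem_image_of_mem _ (hx.2 i)
  have hbudgx : (∑ i, E i * factorLev v (q i) (E i) (x i)) = ∑ i, E i * ℓt i := by
    rw [hbudget]
    calc (∑ i, E i * factorLev v (q i) (E i) (x i))
        = ∑ i, ∑ k, v k * (q i k - x i k) :=
          Finset.sum_congr rfl fun i _ => hEℓ i (x i)
      _ = ∑ k, ∑ i, v k * (q i k - x i k) := Finset.sum_comm
      _ = ∑ k, v k * ((∑ i, q i k) - Q k) := by
          refine Finset.sum_congr rfl fun k _ => ?_
          rw [← hx.1 k, ← Finset.sum_sub_distrib, Finset.mul_sum]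
  have hsum : (∑ i, (E i * ψ (ℓt i) - ηstar * (E i * ℓt i)))
      ≤ ∑ i, (E i * ψ (factorLev v (q i) (E i) (x i))
          - ηstar * (E i * factorLev v (q i) (E i) (x i))) := by
    refine Finset.sum_le_sum fun i _ => ?_
    have h := (hℓt i).2 _ (hmem i)
    nlinarith [mul_le_mul_of_nonneg_left h (hEpos i).le]
  rw [Finset.sum_sub_distrib, Finset.sum_sub_distrib, ← Finset.mul_sum, ← Finset.mul_sum,
    hbudgx] at hsum
  linarith
end
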